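/- arXiv:1909.06263 — 8 statements merged into one kernel-verified Lean document; each statement's English description precedes it below -/
import Mathlib

section
/- Let H be a real inner product space, let F and G be subsets of H, and let θ ∈ [0,1). Suppose that |⟨f₁ − f₂, g₁ − g₂⟩| ≤ θ‖f₁ − f₂‖‖g₁ − g₂‖ for all f₁, f₂ ∈ F and g₁, g₂ ∈ G. Then the decomposition of any element of H as a sum of an element of F and an element of G is unique: if f₁, f₂ ∈ F and g₁, g₂ ∈ G satisfy f₁ + g₁ = f₂ + g₂, then f₁ = f₂ and g₁ = g₂. (Paper's Lemma 1: L₂-separable function classes yield an identifiable decomposition h = f* + g*.) -/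
open RealInnerProductSpace

/-! A vector `u` makes the angle `π` with `-u`, so a strict bound `θ < 1` on the cosine of the
angle between `F - F` and `G - G` leaves no room for `f₁ - f₂ = -(g₁ - g₂) ≠ 0`. -/

theorem eq_zero_of_abs_inner_neg_le {H : Type*} [NormedAddCommGroup H] [InnerProductSpace ℝ H]
    {u : H} {θ : ℝ} (hθ : θ < 1) (h : |⟪u, -u⟫| ≤ θ * (‖u‖ * ‖-u‖)) : u = 0 := by
  rw [inner_neg_right, abs_neg, real_inner_self_eq_norm_mul_norm, norm_neg, abs_mul_self] at h
  have hsq : ‖u‖ * ‖u‖ ≤ 0 := by nlinarith [mul_self_nonneg ‖u‖]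
  exact norm_eq_zero.mp (mul_self_eq_zero.mp (le_antisymm hsq (mul_self_nonneg _)))

theorem separable_decomposition_unique_general
    {H : Type*} [NormedAddCommGroup H] [InnerProductSpace ℝ H]
    (F G : Set H) (θ : ℝ) (hθ1 : θ < 1)
    (hsep : ∀ f₁ ∈ F, ∀ f₂ ∈ F, ∀ g₁ ∈ G, ∀ g₂ ∈ G,
      |(⟪f₁ - f₂, g₁ - g₂⟫)| ≤ θ * (‖f₁ - f₂‖ * ‖g₁ - g₂‖))
    (f₁ f₂ g₁ g₂ : H) (hf₁ : f₁ ∈ F) (hf₂ : f₂ ∈ F) (hg₁ : g₁ ∈ G) (hg₂ : g₂ ∈ G)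
    (hsum : f₁ + g₁ = f₂ + g₂) :
    f₁ = f₂ ∧ g₁ = g₂ := by
  have hg : g₁ - g₂ = -(f₁ - f₂) := by
    rw [neg_sub, sub_eq_sub_iff_add_eq_add, add_comm, hsum, add_comm]
  have hf : f₁ - f₂ = 0 :=
    eq_zero_of_abs_inner_neg_le hθ1 (hg ▸ hsep f₁ hf₁ f₂ hf₂ g₁ hg₁ g₂ hg₂)
  exact ⟨sub_eq_zero.mp hf, sub_eq_zero.mp (by rw [hg, hf, neg_zero])⟩

/-- Paper's Lemma 1: if the classes `F` and `G` are `θ`-separable for some `θ ∈ [0,1)`,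
then the decomposition of an element as a sum of an element of `F` and an element of `G`
is unique. -/
theorem separable_decomposition_unique
    {H : Type*} [NormedAddCommGroup H] [InnerProductSpace ℝ H]
    (F G : Set H) (θ : ℝ) (hθ0 : 0 ≤ θ) (hθ1 : θ < 1)
    (hsep : ∀ f₁ ∈ F, ∀ f₂ ∈ F, ∀ g₁ ∈ G, ∀ g₂ ∈ G,
      |(⟪f₁ - f₂, g₁ - g₂⟫)| ≤ θ * (‖f₁ - f₂‖ * ‖g₁ - g₂‖))
    (f₁ f₂ g₁ g₂ : H) (hf₁ : f₁ ∈ F) (hf₂ : f₂ ∈ F) (hg₁ : g₁ ∈ G) (hg₂ : g₂ ∈ G)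
    (hsum : f₁ + g₁ = f₂ + g₂) :
    f₁ = f₂ ∧ g₁ = g₂ :=
  separable_decomposition_unique_general F G θ hθ1 hsep f₁ f₂ g₁ g₂ hf₁ hf₂ hg₁ hg₂ hsum
end

section
/- Assume the alternating-minimization framework, and assume F and G are θ-separable for some θ ∈ [0,1). Let (f̂, ĝ) be a joint minimizer and let (f_m, g_m), m ≥ 1, be alternating-minimization iterates. Then for every m ≥ 3, ‖f_m − f̂‖ + ‖g_m − ĝ‖ ≤ θ^{2m−6}(‖f₁ − f̂‖ + ‖g₁ − ĝ‖) (with 0⁰ = 1), and moreover L_f(f_m) → L_f(f̂) and L_g(g_m) → L_g(ĝ) as m → ∞. (Paper's Theorem 1: linear convergence of the iterative algorithm under separability with respect to the empirical norm.) -/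
open RealInnerProductSpace Filter

lemma aux_le_zero (a B : ℝ) (hB : 0 ≤ B)
    (h : ∀ t : ℝ, 0 < t → t ≤ 1 → a ≤ t * B) : a ≤ 0 := by
  by_contra h'
  push_neg at h'
  rcases eq_or_lt_of_le hB with hB0 | hB0
  · have := h 1 one_pos le_rfl
    rw [← hB0] at this
    simp at this
    linarith
  · have ht0 : 0 < min 1 (a / (2 * B)) := lt_min one_pos (by positivity)
    have h1 := h _ ht0 (min_le_left _ _)
    have h2 : min 1 (a / (2 * B)) * B ≤ (a / (2 * B)) * B :=
      mul_le_mul_of_nonneg_right (min_le_right _ _) hB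
    have h3 : (a / (2 * B)) * B = a / 2 := by field_simp
    linarith

lemma variational_ineq {H : Type*} [NormedAddCommGroup H] [InnerProductSpace ℝ H]
    {C : Set H} (hC : Convex ℝ C) {L : H → ℝ} (hL : ConvexOn ℝ C L)
    {x₀ : H} (hx₀ : x₀ ∈ C) (r : H)
    (hm : ∀ x ∈ C, ‖r‖ ^ 2 + L x₀ ≤ ‖r - (x - x₀)‖ ^ 2 + L x) :
    ∀ x ∈ C, 2 * ⟪r, x - x₀⟫ ≤ L x - L x₀ := by
  intro x hx
  have key : ∀ t : ℝ, 0 < t → t ≤ 1 →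
      2 * ⟪r, x - x₀⟫ - (L x - L x₀) ≤ t * ‖x - x₀‖ ^ 2 := by
    intro t ht0 ht1
    have hmem : (1 - t) • x₀ + t • x ∈ C := hC hx₀ hx (by linarith) ht0.le (by ring)
    have heq : (1 - t) • x₀ + t • x = x₀ + t • (x - x₀) := by module
    have hLt : L (x₀ + t • (x - x₀)) ≤ (1 - t) * L x₀ + t * L x := by
      rw [← heq]; exact hL.2 hx₀ hx (by linarith) ht0.le (by ring)
    have h1 := hm _ (heq ▸ hmem)
    have hexp : ‖r - (x₀ + t • (x - x₀) - x₀)‖ ^ 2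
        = ‖r‖ ^ 2 - 2 * (t * ⟪r, x - x₀⟫) + t ^ 2 * ‖x - x₀‖ ^ 2 := by
      have h2 : x₀ + t • (x - x₀) - x₀ = t • (x - x₀) := by abel
      rw [h2, norm_sub_sq_real, real_inner_smul_right, norm_smul]
      rw [Real.norm_eq_abs, abs_of_pos ht0]
      ring
    have h4 : t * (2 * ⟪r, x - x₀⟫ - (L x - L x₀)) ≤ t * (t * ‖x - x₀‖ ^ 2) := by
      nlinarith [h1, hLt, hexp]
    exact le_of_mul_le_mul_left h4 ht0
  have := aux_le_zero _ _ (by positivity) key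
  linarith

/-- from `‖d‖² ≤ c * ‖d‖` with `0 ≤ c`, conclude `‖d‖ ≤ c`. -/
lemma norm_le_of_sq {H : Type*} [NormedAddCommGroup H] (d : H) (c : ℝ) (hc : 0 ≤ c)
    (h : ‖d‖ ^ 2 ≤ c * ‖d‖) : ‖d‖ ≤ c := by
  rcases eq_or_lt_of_le (norm_nonneg d) with h0 | h0
  · rw [← h0]; exact hc
  · have : ‖d‖ * ‖d‖ ≤ c * ‖d‖ := by nlinarith
    exact le_of_mul_le_mul_right this h0

set_option maxHeartbeats 1000000 in
/-- Paper's Theorem 1: linear convergence of the alternating-minimization (cyclic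
coordinate descent) algorithm under `θ`-separability of the classes `F` and `G`. -/
theorem altMin_linear_convergence_separable
    {H : Type*} [NormedAddCommGroup H] [InnerProductSpace ℝ H]
    (F G : Set H) (hF : Convex ℝ F) (hG : Convex ℝ G)
    (y : H) (Lf Lg : H → ℝ)
    (hLf : ConvexOn ℝ F Lf) (hLg : ConvexOn ℝ G Lg)
    (θ : ℝ) (hθ0 : 0 ≤ θ) (hθ1 : θ < 1)
    (hsep : ∀ f₁ ∈ F, ∀ f₂ ∈ F, ∀ g₁ ∈ G, ∀ g₂ ∈ G,
      |(⟪f₁ - f₂, g₁ - g₂⟫)| ≤ θ * (‖f₁ - f₂‖ * ‖g₁ - g₂‖))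
    (fhat ghat : H) (hfhatF : fhat ∈ F) (hghatG : ghat ∈ G)
    (hmin : ∀ f ∈ F, ∀ g ∈ G,
      ‖y - fhat - ghat‖ ^ 2 + Lf fhat + Lg ghat ≤ ‖y - f - g‖ ^ 2 + Lf f + Lg g)
    (f g : ℕ → H) (hf0 : f 0 ∈ F)
    (hfF : ∀ m, 1 ≤ m → f m ∈ F) (hgG : ∀ m, 1 ≤ m → g m ∈ G)
    (hgstep : ∀ m, 1 ≤ m → ∀ g' ∈ G,
      ‖y - f (m - 1) - g m‖ ^ 2 + Lg (g m) ≤ ‖y - f (m - 1) - g'‖ ^ 2 + Lg g')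
    (hfstep : ∀ m, 1 ≤ m → ∀ f' ∈ F,
      ‖y - f m - g m‖ ^ 2 + Lf (f m) ≤ ‖y - f' - g m‖ ^ 2 + Lf f') :
    (∀ m, 3 ≤ m →
      ‖f m - fhat‖ + ‖g m - ghat‖ ≤ θ ^ (2 * m - 6) * (‖f 1 - fhat‖ + ‖g 1 - ghat‖))
    ∧ Tendsto (fun m => Lf (f m)) atTop (nhds (Lf fhat))
    ∧ Tendsto (fun m => Lg (g m)) atTop (nhds (Lg ghat)) := by
  have hfAll : ∀ m, f m ∈ F := by
    intro m
    cases m with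
    | zero => exact hf0
    | succ k => exact hfF _ (Nat.succ_le_succ (Nat.zero_le _))
  -- variational inequalities for the joint minimizer
  have hVg : ∀ x ∈ G, 2 * ⟪y - fhat - ghat, x - ghat⟫ ≤ Lg x - Lg ghat := by
    apply variational_ineq hG hLg hghatG
    intro x hx
    have h := hmin fhat hfhatF x hx
    have e : y - fhat - x = (y - fhat - ghat) - (x - ghat) := by abel
    rw [e] at h
    linarith
  have hVf : ∀ x ∈ F, 2 * ⟪y - fhat - ghat, x - fhat⟫ ≤ Lf x - Lf fhat := by
    apply variational_ineq hF hLf hfhatF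
    intro x hx
    have h := hmin x hx ghat hghatG
    have e : y - x - ghat = (y - fhat - ghat) - (x - fhat) := by abel
    rw [e] at h
    linarith
  -- variational inequalities for the iterates
  have hVgm : ∀ m, 1 ≤ m → ∀ x ∈ G,
      2 * ⟪y - f (m - 1) - g m, x - g m⟫ ≤ Lg x - Lg (g m) := by
    intro m hm
    apply variational_ineq hG hLg (hgG m hm)
    intro x hx
    have h := hgstep m hm x hx
    have e : y - f (m - 1) - x = (y - f (m - 1) - g m) - (x - g m) := by abel
    rw [e] at h
    linarith
  have hVfm : ∀ m, 1 ≤ m → ∀ x ∈ F,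
      2 * ⟪y - f m - g m, x - f m⟫ ≤ Lf x - Lf (f m) := by
    intro m hm
    apply variational_ineq hF hLf (hfF m hm)
    intro x hx
    have h := hfstep m hm x hx
    have e : y - x - g m = (y - f m - g m) - (x - f m) := by abel
    rw [e] at h
    linarith
  -- contraction step for g
  have hgcon : ∀ m, 1 ≤ m → ‖g m - ghat‖ ≤ θ * ‖f (m - 1) - fhat‖ := by
    intro m hm
    have h1 := hVgm m hm ghat hghatG
    have h2 := hVg (g m) (hgG m hm)
    have e1 : ⟪y - fhat - ghat, g m - ghat⟫ = -⟪y - fhat - ghat, ghat - g m⟫ := by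
      rw [← inner_neg_right]; congr 1; abel
    rw [e1] at h2
    have hsum : ⟪(fhat - f (m - 1)) + (ghat - g m), ghat - g m⟫ ≤ 0 := by
      have e : (fhat - f (m - 1)) + (ghat - g m)
          = (y - f (m - 1) - g m) - (y - fhat - ghat) := by abel
      rw [e, inner_sub_left]
      linarith
    rw [inner_add_left, real_inner_self_eq_norm_sq] at hsum
    have e2 : ⟪fhat - f (m - 1), ghat - g m⟫ = -⟪f (m - 1) - fhat, ghat - g m⟫ := by
      rw [← inner_neg_left]; congr 1; abel
    have hs := hsep (f (m - 1)) (hfAll _) fhat hfhatF ghat hghatG (g m) (hgG m hm)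
    have habs := le_abs_self ⟪f (m - 1) - fhat, ghat - g m⟫
    have hsq : ‖ghat - g m‖ ^ 2 ≤ (θ * ‖f (m - 1) - fhat‖) * ‖ghat - g m‖ := by
      nlinarith [hsum, e2, habs, hs]
    have := norm_le_of_sq _ _ (by positivity) hsq
    rwa [norm_sub_rev]
  -- contraction step for f
  have hfcon : ∀ m, 1 ≤ m → ‖f m - fhat‖ ≤ θ * ‖g m - ghat‖ := by
    intro m hm
    have h1 := hVfm m hm fhat hfhatF
    have h2 := hVf (f m) (hfF m hm)
    have e1 : ⟪y - fhat - ghat, f m - fhat⟫ = -⟪y - fhat - ghat, fhat - f m⟫ := by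
      rw [← inner_neg_right]; congr 1; abel
    rw [e1] at h2
    have hsum : ⟪(ghat - g m) + (fhat - f m), fhat - f m⟫ ≤ 0 := by
      have e : (ghat - g m) + (fhat - f m)
          = (y - f m - g m) - (y - fhat - ghat) := by abel
      rw [e, inner_sub_left]
      linarith
    rw [inner_add_left, real_inner_self_eq_norm_sq] at hsum
    have e2 : ⟪ghat - g m, fhat - f m⟫ = -⟪fhat - f m, g m - ghat⟫ := by
      rw [real_inner_comm, ← inner_neg_right]; congr 1; abel
    have hs := hsep fhat hfhatF (f m) (hfF m hm) (g m) (hgG m hm) ghat hghatG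
    have habs := le_abs_self ⟪fhat - f m, g m - ghat⟫
    have hsq : ‖fhat - f m‖ ^ 2 ≤ (θ * ‖g m - ghat‖) * ‖fhat - f m‖ := by
      nlinarith [hsum, e2, habs, hs, norm_sub_rev (g m) ghat]
    have := norm_le_of_sq _ _ (by positivity) hsq
    rwa [norm_sub_rev]
  set S : ℕ → ℝ := fun m => ‖f m - fhat‖ + ‖g m - ghat‖ with hS
  have hS0 : ∀ m, 0 ≤ S m := fun m => by positivity
  have hstep2 : ∀ m, 2 ≤ m → S m ≤ θ ^ 2 * S (m - 1) := by
    intro m hm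
    have h1 := hgcon m (by omega)
    have h2 := hfcon m (by omega)
    have h3 := hfcon (m - 1) (by omega)
    have h4 : g m - ghat = g m - ghat := rfl
    -- δ_m ≤ θ ε_{m-1} ≤ θ² δ_{m-1};  ε_m ≤ θ δ_m ≤ θ² ε_{m-1}
    have hδ : ‖g m - ghat‖ ≤ θ ^ 2 * ‖g (m - 1) - ghat‖ := by nlinarith
    have hε : ‖f m - fhat‖ ≤ θ ^ 2 * ‖f (m - 1) - fhat‖ := by
      nlinarith [norm_nonneg (g m - ghat)]
    simp only [hS]
    nlinarith [norm_nonneg (f (m-1) - fhat), norm_nonneg (g (m-1) - ghat)]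
  have hgeo : ∀ k : ℕ, S (k + 1) ≤ (θ ^ 2) ^ k * S 1 := by
    intro k
    induction k with
    | zero => simp
    | succ n ih =>
      have h1 := hstep2 (n + 2) (by omega)
      have e : n + 2 - 1 = n + 1 := rfl
      rw [e] at h1
      calc S (n + 1 + 1) ≤ θ ^ 2 * S (n + 1) := h1
        _ ≤ θ ^ 2 * ((θ ^ 2) ^ n * S 1) := by
            apply mul_le_mul_of_nonneg_left ih (by positivity)
        _ = (θ ^ 2) ^ (n + 1) * S 1 := by ring
  have hSm : ∀ m, 1 ≤ m → S m ≤ (θ ^ 2) ^ (m - 1) * S 1 := by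
    intro m hm
    obtain ⟨k, rfl⟩ : ∃ k, m = k + 1 := ⟨m - 1, by omega⟩
    simpa using hgeo k
  have hpowle1 : ∀ k : ℕ, (θ ^ 2) ^ k ≤ 1 := fun k =>
    pow_le_one₀ (by positivity) (by nlinarith)
  have hSle : ∀ m, 1 ≤ m → S m ≤ S 1 := by
    intro m hm
    calc S m ≤ (θ ^ 2) ^ (m - 1) * S 1 := hSm m hm
      _ ≤ 1 * S 1 := mul_le_mul_of_nonneg_right (hpowle1 _) (hS0 1)
      _ = S 1 := one_mul _
  have hθ2 : θ ^ 2 < 1 := by nlinarith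
  have htend : Tendsto (fun m : ℕ => (θ ^ 2) ^ (m - 1) * S 1) atTop (nhds 0) := by
    have h1 : Tendsto (fun k : ℕ => (θ ^ 2) ^ k) atTop (nhds 0) :=
      tendsto_pow_atTop_nhds_zero_of_lt_one (by positivity) hθ2
    have h2 : Tendsto (fun m : ℕ => m - 1) atTop atTop := tendsto_sub_atTop_nat 1
    have := (h1.comp h2).mul_const (S 1)
    simpa using this
  refine ⟨?_, ?_, ?_⟩
  · -- part 1
    intro m hm
    obtain ⟨k, rfl⟩ : ∃ k, m = k + 1 := ⟨m - 1, by omega⟩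
    have h1 : S (k + 1) ≤ (θ ^ 2) ^ k * S 1 := hgeo k
    have e1 : (θ ^ 2) ^ k = θ ^ (2 * k) := by rw [← pow_mul]
    have e2 : 2 * (k + 1) - 6 = 2 * k - 4 := by omega
    have h2 : θ ^ (2 * k) ≤ θ ^ (2 * k - 4) :=
      pow_le_pow_of_le_one hθ0 hθ1.le (by omega)
    calc S (k + 1) ≤ (θ ^ 2) ^ k * S 1 := h1
      _ = θ ^ (2 * k) * S 1 := by rw [e1]
      _ ≤ θ ^ (2 * k - 4) * S 1 := mul_le_mul_of_nonneg_right h2 (hS0 1)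
      _ = θ ^ (2 * (k + 1) - 6) * S 1 := by rw [e2]
  · -- Lf convergence
    have hC : ∀ m, 1 ≤ m →
        |Lf (f m) - Lf fhat| ≤ 2 * (‖y - fhat - ghat‖ + 2 * S 1) * ‖f m - fhat‖ := by
      intro m hm
      have hlow := hVf (f m) (hfF m hm)
      have hup := hVfm m hm fhat hfhatF
      have hR1 := abs_real_inner_le_norm (y - fhat - ghat) (f m - fhat)
      have hR2 := abs_real_inner_le_norm (y - f m - g m) (fhat - f m)
      have hRn : ‖y - f m - g m‖ ≤ ‖y - fhat - ghat‖ + 2 * S 1 := by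
        have e : y - f m - g m = (y - fhat - ghat) - (f m - fhat) - (g m - ghat) := by abel
        have h1 : ‖y - f m - g m‖ ≤ ‖(y - fhat - ghat) - (f m - fhat)‖ + ‖g m - ghat‖ := by
          rw [e]; exact norm_sub_le _ _
        have h2 : ‖(y - fhat - ghat) - (f m - fhat)‖ ≤ ‖y - fhat - ghat‖ + ‖f m - fhat‖ :=
          norm_sub_le _ _
        have h3 : S m ≤ S 1 := hSle m hm
        simp only [hS] at h3
        have h4 := hS0 1
        simp only [hS] at h4 ⊢
        linarith
      have hfn : ‖fhat - f m‖ = ‖f m - fhat‖ := norm_sub_rev _ _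
      have hb1 := abs_le.mp hR1
      have hb2 := abs_le.mp hR2
      rw [abs_le]
      constructor
      · -- lower:  -(...) ≤ Lf (f m) - Lf fhat
        have h5 : 0 ≤ ‖f m - fhat‖ := norm_nonneg _
        have h6 := hS0 1
        nlinarith [hb1.2]
      · -- upper
        have h5 : 0 ≤ ‖f m - fhat‖ := norm_nonneg _
        have h7 : ⟪y - f m - g m, fhat - f m⟫ ≥ -(‖y - f m - g m‖ * ‖fhat - f m‖) := by
          linarith [hb2.1]
        nlinarith [norm_nonneg (y - f m - g m)]
    rw [tendsto_iff_dist_tendsto_zero]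
    apply squeeze_zero' (Eventually.of_forall fun m => dist_nonneg)
      (g := fun m => 2 * (‖y - fhat - ghat‖ + 2 * S 1) * ((θ ^ 2) ^ (m - 1) * S 1))
    · filter_upwards [eventually_ge_atTop 1] with m hm
      rw [Real.dist_eq]
      have h1 := hC m hm
      have h2 : ‖f m - fhat‖ ≤ (θ ^ 2) ^ (m - 1) * S 1 := by
        have h := hSm m hm
        simp only [hS] at h ⊢
        linarith [norm_nonneg (g m - ghat)]
      calc |Lf (f m) - Lf fhat| ≤ 2 * (‖y - fhat - ghat‖ + 2 * S 1) * ‖f m - fhat‖ := h1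
        _ ≤ 2 * (‖y - fhat - ghat‖ + 2 * S 1) * ((θ ^ 2) ^ (m - 1) * S 1) := by
            apply mul_le_mul_of_nonneg_left h2
            have := hS0 1
            positivity
    · have := htend.const_mul (2 * (‖y - fhat - ghat‖ + 2 * S 1))
      simpa using this
  · -- Lg convergence
    have hC : ∀ m, 2 ≤ m →
        |Lg (g m) - Lg ghat| ≤ 2 * (‖y - fhat - ghat‖ + 2 * S 1) * ‖g m - ghat‖ := by
      intro m hm
      have hm1 : 1 ≤ m := by omega
      have hlow := hVg (g m) (hgG m hm1)
      have hup := hVgm m hm1 ghat hghatG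
      have hR1 := abs_real_inner_le_norm (y - fhat - ghat) (g m - ghat)
      have hR2 := abs_real_inner_le_norm (y - f (m - 1) - g m) (ghat - g m)
      have hRn : ‖y - f (m - 1) - g m‖ ≤ ‖y - fhat - ghat‖ + 2 * S 1 := by
        have e : y - f (m - 1) - g m
            = (y - fhat - ghat) - (f (m - 1) - fhat) - (g m - ghat) := by abel
        have h1 : ‖y - f (m - 1) - g m‖
            ≤ ‖(y - fhat - ghat) - (f (m - 1) - fhat)‖ + ‖g m - ghat‖ := by
          rw [e]; exact norm_sub_le _ _
        have h2 : ‖(y - fhat - ghat) - (f (m - 1) - fhat)‖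
            ≤ ‖y - fhat - ghat‖ + ‖f (m - 1) - fhat‖ := norm_sub_le _ _
        have h3 : S (m - 1) ≤ S 1 := hSle (m - 1) (by omega)
        have h4 : S m ≤ S 1 := hSle m hm1
        simp only [hS] at h3 h4 ⊢
        linarith [norm_nonneg (g (m - 1) - ghat), norm_nonneg (f m - fhat)]
      have hgn : ‖ghat - g m‖ = ‖g m - ghat‖ := norm_sub_rev _ _
      have hb1 := abs_le.mp hR1
      have hb2 := abs_le.mp hR2
      rw [abs_le]
      constructor
      · have h5 : 0 ≤ ‖g m - ghat‖ := norm_nonneg _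
        have h6 := hS0 1
        nlinarith [hb1.2]
      · have h5 : 0 ≤ ‖g m - ghat‖ := norm_nonneg _
        have h7 : ⟪y - f (m - 1) - g m, ghat - g m⟫
            ≥ -(‖y - f (m - 1) - g m‖ * ‖ghat - g m‖) := by
          linarith [hb2.1]
        nlinarith [norm_nonneg (y - f (m - 1) - g m)]
    rw [tendsto_iff_dist_tendsto_zero]
    apply squeeze_zero' (Eventually.of_forall fun m => dist_nonneg)
      (g := fun m => 2 * (‖y - fhat - ghat‖ + 2 * S 1) * ((θ ^ 2) ^ (m - 1) * S 1))
    · filter_upwards [eventually_ge_atTop 2] with m hm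
      rw [Real.dist_eq]
      have h1 := hC m hm
      have h2 : ‖g m - ghat‖ ≤ (θ ^ 2) ^ (m - 1) * S 1 := by
        have h := hSm m (by omega : 1 ≤ m)
        simp only [hS] at h ⊢
        linarith [norm_nonneg (f m - fhat)]
      calc |Lg (g m) - Lg ghat| ≤ 2 * (‖y - fhat - ghat‖ + 2 * S 1) * ‖g m - ghat‖ := h1
        _ ≤ 2 * (‖y - fhat - ghat‖ + 2 * S 1) * ((θ ^ 2) ^ (m - 1) * S 1) := by
            apply mul_le_mul_of_nonneg_left h2
            have := hS0 1
            positivity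
    · have := htend.const_mul (2 * (‖y - fhat - ghat‖ + 2 * S 1))
      simpa using this
end

section
/- Assume the alternating-minimization framework, and assume that L_f or L_g is γ-strongly convex for some γ > 0. Let (f̂, ĝ) be a joint minimizer and let (f_m, g_m), m ≥ 1, be alternating-minimization iterates. Then for every m ≥ 1, ‖f_m − f̂‖ + ‖g_m − ĝ‖ ≤ (2/(2 + γ))^{m−1}(‖f₁ − f̂‖ + ‖g₁ − ĝ‖), and moreover L_f(f_m) → L_f(f̂) and L_g(g_m) → L_g(ĝ) as m → ∞. (Paper's Theorem 3: linear convergence of the algorithm for possibly non-separable classes when one penalty is strongly convex.) -/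
open RealInnerProductSpace Filter

lemma combo_norm_sq {H : Type*} [NormedAddCommGroup H] [InnerProductSpace ℝ H]
    (u v : H) (t : ℝ) :
    ‖t • u + (1 - t) • v‖ ^ 2 = t * ‖u‖ ^ 2 + (1 - t) * ‖v‖ ^ 2 - t * (1 - t) * ‖u - v‖ ^ 2 := by
  simp only [← real_inner_self_eq_norm_sq, inner_add_left, inner_add_right,
    inner_sub_left, inner_sub_right, real_inner_smul_left, real_inner_smul_right]
  rw [real_inner_comm v u]
  ring

lemma four_norm_inner {H : Type*} [NormedAddCommGroup H] [InnerProductSpace ℝ H]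
    (a b v w : H) :
    ‖a - w‖ ^ 2 - ‖a - v‖ ^ 2 + ‖b - v‖ ^ 2 - ‖b - w‖ ^ 2 = 2 * (inner ℝ (a - b) (v - w) : ℝ) := by
  simp only [← real_inner_self_eq_norm_sq, inner_sub_left, inner_sub_right]
  rw [real_inner_comm w a, real_inner_comm v a, real_inner_comm v b, real_inner_comm w b]
  ring

lemma strong_min {H : Type*} [NormedAddCommGroup H] [InnerProductSpace ℝ H]
    {C : Set H} (hC : Convex ℝ C) (a : H) (L : H → ℝ) (c : ℝ)
    (hq : ∀ x ∈ C, ∀ z ∈ C, ∀ t ∈ Set.Icc (0:ℝ) 1,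
      L (t • x + (1 - t) • z) ≤ t * L x + (1 - t) * L z - c * (t * (1 - t)) * ‖x - z‖ ^ 2)
    {v : H} (hv : v ∈ C)
    (hmin : ∀ x ∈ C, ‖a - v‖ ^ 2 + L v ≤ ‖a - x‖ ^ 2 + L x) :
    ∀ x ∈ C, ‖a - v‖ ^ 2 + L v + (1 + c) * ‖x - v‖ ^ 2 ≤ ‖a - x‖ ^ 2 + L x := by
  intro x hx
  have key : ∀ t : ℝ, 0 < t → t ≤ 1 →
      ‖a - v‖ ^ 2 + L v + (1 + c) * (1 - t) * ‖x - v‖ ^ 2 ≤ ‖a - x‖ ^ 2 + L x := by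
    intro t ht0 ht1
    have hzC : t • x + (1 - t) • v ∈ C :=
      hC hx hv (le_of_lt ht0) (by linarith) (by ring)
    have h1 := hmin _ hzC
    have h2 : a - (t • x + (1 - t) • v) = t • (a - x) + (1 - t) • (a - v) := by
      simp only [smul_sub, sub_smul, one_smul]; abel
    have h3 : ‖a - (t • x + (1 - t) • v)‖ ^ 2
        = t * ‖a - x‖ ^ 2 + (1 - t) * ‖a - v‖ ^ 2 - t * (1 - t) * ‖x - v‖ ^ 2 := by
      rw [h2, combo_norm_sq]
      have h4 : (a - x) - (a - v) = -(x - v) := by abel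
      rw [h4, norm_neg]
    have h4 := hq x hx v hv t ⟨le_of_lt ht0, ht1⟩
    rw [h3] at h1
    have h5 : t * (‖a - v‖ ^ 2 + L v + (1 + c) * (1 - t) * ‖x - v‖ ^ 2)
        ≤ t * (‖a - x‖ ^ 2 + L x) := by nlinarith [h1, h4]
    exact le_of_mul_le_mul_left h5 ht0
  have hseq : ∀ n : ℕ,
      ‖a - v‖ ^ 2 + L v + (1 + c) * (1 - 1 / (n + 1)) * ‖x - v‖ ^ 2 ≤ ‖a - x‖ ^ 2 + L x := by
    intro n
    have hn : (0:ℝ) < (n:ℝ) + 1 := by positivity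
    exact key _ (by positivity) (by rw [div_le_one hn]; linarith [Nat.cast_nonneg (α := ℝ) n])
  have hT : Tendsto (fun n : ℕ => ‖a - v‖ ^ 2 + L v + (1 + c) * (1 - 1 / ((n:ℝ) + 1)) * ‖x - v‖ ^ 2)
      atTop (nhds (‖a - v‖ ^ 2 + L v + (1 + c) * (1 - 0) * ‖x - v‖ ^ 2)) :=
    tendsto_const_nhds.add (((tendsto_const_nhds.sub
      tendsto_one_div_add_atTop_nhds_zero_nat).const_mul _).mul_const _)
  have hle := le_of_tendsto hT (Filter.Eventually.of_forall hseq)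
  linarith [hle]

lemma cross_contraction {H : Type*} [NormedAddCommGroup H] [InnerProductSpace ℝ H]
    {C : Set H} (L : H → ℝ) (κ : ℝ) (hκ : 0 < κ)
    (a b : H) {v w : H} (hv : v ∈ C) (hw : w ∈ C)
    (h1 : ∀ x ∈ C, ‖a - v‖ ^ 2 + L v + κ * ‖x - v‖ ^ 2 ≤ ‖a - x‖ ^ 2 + L x)
    (h2 : ∀ x ∈ C, ‖b - w‖ ^ 2 + L w + κ * ‖x - w‖ ^ 2 ≤ ‖b - x‖ ^ 2 + L x) :
    κ * ‖v - w‖ ≤ ‖a - b‖ := by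
  have hA := h1 w hw
  have hB := h2 v hv
  have he := four_norm_inner a b v w
  rw [norm_sub_rev w v] at hA
  have hinner : κ * ‖v - w‖ ^ 2 ≤ (inner ℝ (a - b) (v - w) : ℝ) := by linarith [hA, hB, he]
  have hcs := real_inner_le_norm (a - b) (v - w)
  rcases eq_or_lt_of_le (norm_nonneg (v - w)) with h | h
  · rw [← h]; simp [norm_nonneg]
  · have hfin := hinner.trans hcs
    rw [sq] at hfin
    nlinarith [hfin, norm_nonneg (a - b)]

/-- Paper's Theorem 3: linear convergence of the alternating-minimization algorithm
when at least one of the penalties `Lf`, `Lg` is `γ`-strongly convex. -/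
theorem altMin_linear_convergence_stronglyConvex
    {H : Type*} [NormedAddCommGroup H] [InnerProductSpace ℝ H]
    (F G : Set H) (hF : Convex ℝ F) (hG : Convex ℝ G)
    (y : H) (Lf Lg : H → ℝ)
    (hLf : ConvexOn ℝ F Lf) (hLg : ConvexOn ℝ G Lg)
    (γ : ℝ) (hγ : 0 < γ)
    (hsc : (∀ x ∈ F, ∀ z ∈ F, ∀ t ∈ Set.Icc (0:ℝ) 1,
      Lf (t • x + (1 - t) • z) ≤ t * Lf x + (1 - t) * Lf z - γ / 2 * (t * (1 - t)) * ‖x - z‖ ^ 2)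
      ∨ (∀ x ∈ G, ∀ z ∈ G, ∀ t ∈ Set.Icc (0:ℝ) 1,
      Lg (t • x + (1 - t) • z) ≤ t * Lg x + (1 - t) * Lg z - γ / 2 * (t * (1 - t)) * ‖x - z‖ ^ 2))
    (fhat ghat : H) (hfhatF : fhat ∈ F) (hghatG : ghat ∈ G)
    (hmin : ∀ f ∈ F, ∀ g ∈ G,
      ‖y - fhat - ghat‖ ^ 2 + Lf fhat + Lg ghat ≤ ‖y - f - g‖ ^ 2 + Lf f + Lg g)
    (f g : ℕ → H) (hf0 : f 0 ∈ F)
    (hfF : ∀ m, 1 ≤ m → f m ∈ F) (hgG : ∀ m, 1 ≤ m → g m ∈ G)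
    (hgstep : ∀ m, 1 ≤ m → ∀ g' ∈ G,
      ‖y - f (m - 1) - g m‖ ^ 2 + Lg (g m) ≤ ‖y - f (m - 1) - g'‖ ^ 2 + Lg g')
    (hfstep : ∀ m, 1 ≤ m → ∀ f' ∈ F,
      ‖y - f m - g m‖ ^ 2 + Lf (f m) ≤ ‖y - f' - g m‖ ^ 2 + Lf f') :
    (∀ m, 1 ≤ m →
      ‖f m - fhat‖ + ‖g m - ghat‖ ≤ (2 / (2 + γ)) ^ (m - 1) * (‖f 1 - fhat‖ + ‖g 1 - ghat‖))
    ∧ Tendsto (fun m => Lf (f m)) atTop (nhds (Lf fhat))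
    ∧ Tendsto (fun m => Lg (g m)) atTop (nhds (Lg ghat)) := by
  have h2γ : (0:ℝ) < 2 + γ := by linarith
  set ρ : ℝ := 2 / (2 + γ) with hρdef
  have hρ0 : 0 < ρ := by positivity
  have hρ1 : ρ < 1 := by rw [hρdef, div_lt_one h2γ]; linarith
  -- component minimality of the joint minimizer
  have hghatmin : ∀ g' ∈ G, ‖y - fhat - ghat‖ ^ 2 + Lg ghat ≤ ‖y - fhat - g'‖ ^ 2 + Lg g' := by
    intro g' hg'; have := hmin fhat hfhatF g' hg'; linarith
  have hfhatmin : ∀ f' ∈ F,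
      ‖y - ghat - fhat‖ ^ 2 + Lf fhat ≤ ‖y - ghat - f'‖ ^ 2 + Lf f' := by
    intro f' hf'
    have := hmin f' hf' ghat hghatG
    rw [sub_right_comm y ghat fhat, sub_right_comm y ghat f']
    linarith
  -- rewritten f-step
  have hfstep' : ∀ m, 1 ≤ m → ∀ f' ∈ F,
      ‖y - g m - f m‖ ^ 2 + Lf (f m) ≤ ‖y - g m - f'‖ ^ 2 + Lf f' := by
    intro m hm f' hf'
    rw [sub_right_comm y (g m) (f m), sub_right_comm y (g m) f']
    exact hfstep m hm f' hf'
  -- quantitative convexity of Lf, Lg (plain convex case, c = 0)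
  have hqf0 : ∀ x ∈ F, ∀ z ∈ F, ∀ t ∈ Set.Icc (0:ℝ) 1,
      Lf (t • x + (1 - t) • z) ≤ t * Lf x + (1 - t) * Lf z
        - 0 * (t * (1 - t)) * ‖x - z‖ ^ 2 := by
    intro x hx z hz t ht
    have := hLf.2 hx hz (show (0:ℝ) ≤ t from ht.1)
      (show (0:ℝ) ≤ 1 - t from by linarith [ht.2]) (show t + (1 - t) = 1 from by ring)
    simpa using this
  have hqg0 : ∀ x ∈ G, ∀ z ∈ G, ∀ t ∈ Set.Icc (0:ℝ) 1,
      Lg (t • x + (1 - t) • z) ≤ t * Lg x + (1 - t) * Lg z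
        - 0 * (t * (1 - t)) * ‖x - z‖ ^ 2 := by
    intro x hx z hz t ht
    have := hLg.2 hx hz (show (0:ℝ) ≤ t from ht.1)
      (show (0:ℝ) ≤ 1 - t from by linarith [ht.2]) (show t + (1 - t) = 1 from by ring)
    simpa using this
  have hγ2 : (0:ℝ) < 1 + γ / 2 := by linarith
  -- the key contraction inequalities
  have key : ∃ κf κg : ℝ, 0 < κf ∧ 0 < κg ∧ κf * κg = 1 + γ / 2 ∧
      (∀ m, 1 ≤ m → κg * ‖g m - ghat‖ ≤ ‖f (m - 1) - fhat‖) ∧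
      (∀ m, 1 ≤ m → κf * ‖f m - fhat‖ ≤ ‖g m - ghat‖) := by
    rcases hsc with hsf | hsg
    · refine ⟨1 + γ / 2, 1, hγ2, one_pos, by ring, ?_, ?_⟩
      · intro m hm
        have h1 := strong_min hG (y - f (m - 1)) Lg 0 hqg0 (hgG m hm) (hgstep m hm)
        have h2 := strong_min hG (y - fhat) Lg 0 hqg0 hghatG hghatmin
        have hc := cross_contraction Lg (1 + 0) (by norm_num) (y - f (m - 1)) (y - fhat)
          (hgG m hm) hghatG (by simpa using h1) (by simpa using h2)
        have he : y - f (m - 1) - (y - fhat) = -(f (m - 1) - fhat) := by abel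
        rw [he, norm_neg] at hc
        simpa using hc
      · intro m hm
        have h1 := strong_min hF (y - g m) Lf (γ / 2) hsf (hfF m hm) (hfstep' m hm)
        have h2 := strong_min hF (y - ghat) Lf (γ / 2) hsf hfhatF hfhatmin
        have hc := cross_contraction Lf (1 + γ / 2) hγ2 (y - g m) (y - ghat)
          (hfF m hm) hfhatF h1 h2
        have he : y - g m - (y - ghat) = -(g m - ghat) := by abel
        rw [he, norm_neg] at hc
        exact hc
    · refine ⟨1, 1 + γ / 2, one_pos, hγ2, by ring, ?_, ?_⟩
      · intro m hm
        have h1 := strong_min hG (y - f (m - 1)) Lg (γ / 2) hsg (hgG m hm) (hgstep m hm)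
        have h2 := strong_min hG (y - fhat) Lg (γ / 2) hsg hghatG hghatmin
        have hc := cross_contraction Lg (1 + γ / 2) hγ2 (y - f (m - 1)) (y - fhat)
          (hgG m hm) hghatG h1 h2
        have he : y - f (m - 1) - (y - fhat) = -(f (m - 1) - fhat) := by abel
        rw [he, norm_neg] at hc
        exact hc
      · intro m hm
        have h1 := strong_min hF (y - g m) Lf 0 hqf0 (hfF m hm) (hfstep' m hm)
        have h2 := strong_min hF (y - ghat) Lf 0 hqf0 hfhatF hfhatmin
        have hc := cross_contraction Lf (1 + 0) (by norm_num) (y - g m) (y - ghat)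
          (hfF m hm) hfhatF (by simpa using h1) (by simpa using h2)
        have he : y - g m - (y - ghat) = -(g m - ghat) := by abel
        rw [he, norm_neg] at hc
        simpa using hc
  obtain ⟨κf, κg, hκf0, hκg0, hκprod, hGs, hFs⟩ := key
  -- one-step contraction for each coordinate
  have hfstepc : ∀ k, 1 ≤ k → ‖f (k + 1) - fhat‖ ≤ ρ * ‖f k - fhat‖ := by
    intro k hk
    have h1 := hFs (k + 1) (by omega)
    have h2 := hGs (k + 1) (by omega)
    rw [Nat.add_sub_cancel] at h2
    have h3 : (1 + γ / 2) * ‖f (k + 1) - fhat‖ ≤ ‖f k - fhat‖ := by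
      calc (1 + γ / 2) * ‖f (k + 1) - fhat‖ = κg * (κf * ‖f (k + 1) - fhat‖) := by
            rw [← hκprod]; ring
        _ ≤ κg * ‖g (k + 1) - ghat‖ := mul_le_mul_of_nonneg_left h1 (le_of_lt hκg0)
        _ ≤ ‖f k - fhat‖ := h2
    rw [hρdef, div_mul_eq_mul_div, le_div_iff₀ h2γ]
    nlinarith [h3]
  have hgstepc : ∀ k, 1 ≤ k → ‖g (k + 1) - ghat‖ ≤ ρ * ‖g k - ghat‖ := by
    intro k hk
    have h2 := hGs (k + 1) (by omega)
    rw [Nat.add_sub_cancel] at h2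
    have h1 := hFs k hk
    have h3 : (1 + γ / 2) * ‖g (k + 1) - ghat‖ ≤ ‖g k - ghat‖ := by
      calc (1 + γ / 2) * ‖g (k + 1) - ghat‖ = κf * (κg * ‖g (k + 1) - ghat‖) := by
            rw [← hκprod]; ring
        _ ≤ κf * ‖f k - fhat‖ := mul_le_mul_of_nonneg_left h2 (le_of_lt hκf0)
        _ ≤ ‖g k - ghat‖ := h1
    rw [hρdef, div_mul_eq_mul_div, le_div_iff₀ h2γ]
    nlinarith [h3]
  -- geometric decay
  have hgeom : ∀ k : ℕ, ‖f (k + 1) - fhat‖ + ‖g (k + 1) - ghat‖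
      ≤ ρ ^ k * (‖f 1 - fhat‖ + ‖g 1 - ghat‖) := by
    intro k
    induction k with
    | zero => simp
    | succ n ih =>
      calc ‖f (n + 1 + 1) - fhat‖ + ‖g (n + 1 + 1) - ghat‖
          ≤ ρ * (‖f (n + 1) - fhat‖ + ‖g (n + 1) - ghat‖) := by
            rw [mul_add]
            exact add_le_add (hfstepc (n + 1) (by omega)) (hgstepc (n + 1) (by omega))
        _ ≤ ρ * (ρ ^ n * (‖f 1 - fhat‖ + ‖g 1 - ghat‖)) :=
            mul_le_mul_of_nonneg_left ih (le_of_lt hρ0)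
        _ = ρ ^ (n + 1) * (‖f 1 - fhat‖ + ‖g 1 - ghat‖) := by ring
  have part1 : ∀ m, 1 ≤ m →
      ‖f m - fhat‖ + ‖g m - ghat‖ ≤ ρ ^ (m - 1) * (‖f 1 - fhat‖ + ‖g 1 - ghat‖) := by
    intro m hm
    obtain ⟨k, rfl⟩ : ∃ k, m = k + 1 := ⟨m - 1, by omega⟩
    simpa using hgeom k
  -- convergence of the iterates
  have hA0 : Tendsto (fun m : ℕ => ρ ^ (m - 1) * (‖f 1 - fhat‖ + ‖g 1 - ghat‖))
      atTop (nhds 0) := by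
    have h1 : Tendsto (fun k : ℕ => ρ ^ k) atTop (nhds 0) :=
      tendsto_pow_atTop_nhds_zero_of_lt_one (le_of_lt hρ0) hρ1
    have h2 : Tendsto (fun m : ℕ => m - 1) atTop atTop := tendsto_sub_atTop_nat 1
    simpa using (h1.comp h2).mul_const (‖f 1 - fhat‖ + ‖g 1 - ghat‖)
  have hfn : Tendsto (fun m : ℕ => ‖f m - fhat‖) atTop (nhds 0) := by
    apply squeeze_zero' (Filter.Eventually.of_forall fun m => norm_nonneg _) ?_ hA0
    filter_upwards [eventually_ge_atTop 1] with m hm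
    have := part1 m hm
    linarith [norm_nonneg (g m - ghat)]
  have hgn : Tendsto (fun m : ℕ => ‖g m - ghat‖) atTop (nhds 0) := by
    apply squeeze_zero' (Filter.Eventually.of_forall fun m => norm_nonneg _) ?_ hA0
    filter_upwards [eventually_ge_atTop 1] with m hm
    have := part1 m hm
    linarith [norm_nonneg (f m - fhat)]
  have hft : Tendsto f atTop (nhds fhat) := tendsto_iff_norm_sub_tendsto_zero.mpr hfn
  have hgt : Tendsto g atTop (nhds ghat) := tendsto_iff_norm_sub_tendsto_zero.mpr hgn
  have hfprev : Tendsto (fun m : ℕ => f (m - 1)) atTop (nhds fhat) :=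
    hft.comp (tendsto_sub_atTop_nat 1)
  -- quadratic terms converge
  have Q : ∀ (φ ψ : ℕ → H) (φ0 ψ0 : H), Tendsto φ atTop (nhds φ0) →
      Tendsto ψ atTop (nhds ψ0) →
      Tendsto (fun m => ‖y - φ m - ψ m‖ ^ 2) atTop (nhds (‖y - φ0 - ψ0‖ ^ 2)) := by
    intro φ ψ φ0 ψ0 hφ hψ
    exact ((tendsto_const_nhds.sub hφ).sub hψ).norm.pow 2
  have Q1 := Q f g fhat ghat hft hgt
  have Q2 : Tendsto (fun m : ℕ => ‖y - fhat - g m‖ ^ 2) atTop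
      (nhds (‖y - fhat - ghat‖ ^ 2)) := Q (fun _ => fhat) g fhat ghat tendsto_const_nhds hgt
  have Q3 : Tendsto (fun m : ℕ => ‖y - f (m - 1) - ghat‖ ^ 2) atTop
      (nhds (‖y - fhat - ghat‖ ^ 2)) :=
    Q (fun m : ℕ => f (m - 1)) (fun _ => ghat) fhat ghat hfprev tendsto_const_nhds
  have Q4 : Tendsto (fun m : ℕ => ‖y - f (m - 1) - g m‖ ^ 2) atTop
      (nhds (‖y - fhat - ghat‖ ^ 2)) :=
    Q (fun m : ℕ => f (m - 1)) g fhat ghat hfprev hgt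
  -- convergence of Lf (f m)
  have hLfT : Tendsto (fun m => Lf (f m)) atTop (nhds (Lf fhat)) := by
    apply tendsto_of_tendsto_of_tendsto_of_le_of_le'
      (g := fun m : ℕ => Lf fhat + (‖y - fhat - ghat‖ ^ 2 - ‖y - f m - g m‖ ^ 2)
        - (‖y - f (m - 1) - ghat‖ ^ 2 - ‖y - f (m - 1) - g m‖ ^ 2))
      (h := fun m : ℕ => Lf fhat + (‖y - fhat - g m‖ ^ 2 - ‖y - f m - g m‖ ^ 2))
    · have hT : Tendsto (fun m : ℕ => Lf fhat
          + (‖y - fhat - ghat‖ ^ 2 - ‖y - f m - g m‖ ^ 2)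
          - (‖y - f (m - 1) - ghat‖ ^ 2 - ‖y - f (m - 1) - g m‖ ^ 2)) atTop
          (nhds (Lf fhat + (‖y - fhat - ghat‖ ^ 2 - ‖y - fhat - ghat‖ ^ 2)
          - (‖y - fhat - ghat‖ ^ 2 - ‖y - fhat - ghat‖ ^ 2))) :=
        (tendsto_const_nhds.add (tendsto_const_nhds.sub Q1)).sub (Q3.sub Q4)
      simpa using hT
    · have hT : Tendsto (fun m : ℕ => Lf fhat
          + (‖y - fhat - g m‖ ^ 2 - ‖y - f m - g m‖ ^ 2)) atTop
          (nhds (Lf fhat + (‖y - fhat - ghat‖ ^ 2 - ‖y - fhat - ghat‖ ^ 2))) :=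
        tendsto_const_nhds.add (Q2.sub Q1)
      simpa using hT
    · filter_upwards [eventually_ge_atTop 1] with m hm
      have hjm := hmin (f m) (hfF m hm) (g m) (hgG m hm)
      have hgs := hgstep m hm ghat hghatG
      linarith
    · filter_upwards [eventually_ge_atTop 1] with m hm
      have hfs := hfstep m hm fhat hfhatF
      linarith
  -- convergence of Lg (g m)
  have hLgT : Tendsto (fun m => Lg (g m)) atTop (nhds (Lg ghat)) := by
    apply tendsto_of_tendsto_of_tendsto_of_le_of_le'
      (g := fun m : ℕ => Lg ghat + (‖y - fhat - ghat‖ ^ 2 - ‖y - fhat - g m‖ ^ 2))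
      (h := fun m : ℕ => Lg ghat
        + (‖y - f (m - 1) - ghat‖ ^ 2 - ‖y - f (m - 1) - g m‖ ^ 2))
    · have hT : Tendsto (fun m : ℕ => Lg ghat
          + (‖y - fhat - ghat‖ ^ 2 - ‖y - fhat - g m‖ ^ 2)) atTop
          (nhds (Lg ghat + (‖y - fhat - ghat‖ ^ 2 - ‖y - fhat - ghat‖ ^ 2))) :=
        tendsto_const_nhds.add (tendsto_const_nhds.sub Q2)
      simpa using hT
    · have hT : Tendsto (fun m : ℕ => Lg ghat
          + (‖y - f (m - 1) - ghat‖ ^ 2 - ‖y - f (m - 1) - g m‖ ^ 2)) atTop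
          (nhds (Lg ghat + (‖y - fhat - ghat‖ ^ 2 - ‖y - fhat - ghat‖ ^ 2))) :=
        tendsto_const_nhds.add (Q3.sub Q4)
      simpa using hT
    · filter_upwards [eventually_ge_atTop 1] with m hm
      have hjm := hmin (f m) (hfF m hm) (g m) (hgG m hm)
      have hfs := hfstep m hm fhat hfhatF
      linarith
    · filter_upwards [eventually_ge_atTop 1] with m hm
      have hgs := hgstep m hm ghat hghatG
      linarith
  exact ⟨part1, hLfT, hLgT⟩
end

section
/- Assume the alternating-minimization framework. Let (f̂, ĝ) be a joint minimizer and let (f_m, g_m), m ≥ 1, be alternating-minimization iterates. Then for every m ≥ 1, ‖f̂ − f_m‖² ≤ −⟨f̂ − f_m, ĝ − g_m⟩, and symmetrically ‖ĝ − g_{m+1}‖² ≤ −⟨ĝ − g_{m+1}, f̂ − f_m⟩. (Key variational inequality in the proof of the paper's Theorem 1, obtained by combining the first-order optimality of the coordinate update with that of the joint minimizer, using only convexity of the penalties.) -/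
/-!
The iterate `f_m` and the joint minimizer `f̂` are both proximal points of the same penalty
`L_f` on `F`, taken at `y - g_m` and `y - ĝ` respectively; likewise `g_{m+1}` and `ĝ` are
proximal points of `L_g` on `G` at `y - f_m` and `y - f̂`. The first-order condition of a
convex proximal problem makes the proximal map firmly nonexpansive,
`‖x₁ - x₂‖² ≤ ⟪a₁ - a₂, x₁ - x₂⟫`, and this is exactly each of the two inequalities.
-/

open RealInnerProductSpace Filter Topology

section Proximal

variable {H : Type*} [NormedAddCommGroup H] [InnerProductSpace ℝ H] {C : Set H} {L : H → ℝ}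

theorem two_mul_inner_le_of_isMinOn {a x z : H} (hL : ConvexOn ℝ C L) (hx : x ∈ C)
    (hz : z ∈ C) (hmin : IsMinOn (fun w => ‖a - w‖ ^ 2 + L w) C x) :
    2 * ⟪a - x, z - x⟫ ≤ L z - L x := by
  have hsegment : ∀ t ∈ Set.Ioc (0 : ℝ) 1,
      2 * ⟪a - x, z - x⟫ ≤ t * ‖z - x‖ ^ 2 + (L z - L x) := by
    rintro t ⟨ht₀, ht₁⟩
    have hopt :
        ‖a - x‖ ^ 2 + L x ≤ ‖a - ((1 - t) • x + t • z)‖ ^ 2 + L ((1 - t) • x + t • z) :=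
      isMinOn_iff.1 hmin _ (hL.1 hx hz (sub_nonneg.2 ht₁) ht₀.le (sub_add_cancel 1 t))
    have hconv := hL.2 hx hz (sub_nonneg.2 ht₁) ht₀.le (sub_add_cancel 1 t)
    have hexpand : ‖a - ((1 - t) • x + t • z)‖ ^ 2
        = ‖a - x‖ ^ 2 - 2 * t * ⟪a - x, z - x⟫ + t ^ 2 * ‖z - x‖ ^ 2 := by
      rw [show a - ((1 - t) • x + t • z) = (a - x) - t • (z - x) by module, norm_sub_sq_real,
        real_inner_smul_right, norm_smul, mul_pow, Real.norm_eq_abs, sq_abs]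
      ring
    simp only [smul_eq_mul] at hconv
    rw [hexpand] at hopt
    refine le_of_mul_le_mul_left ?_ ht₀
    linear_combination hopt + hconv
  have hlim : Tendsto (fun t : ℝ => t * ‖z - x‖ ^ 2 + (L z - L x)) (𝓝[>] 0)
      (𝓝 (L z - L x)) :=
    tendsto_nhdsWithin_of_tendsto_nhds <|
      (by fun_prop : Continuous fun t : ℝ => t * ‖z - x‖ ^ 2 + (L z - L x)).tendsto' 0 _
        (by simp)
  exact ge_of_tendsto hlim (eventually_of_mem (Ioc_mem_nhdsGT one_pos) hsegment)

theorem norm_sub_sq_le_inner_of_isMinOn {a₁ a₂ x₁ x₂ : H} (hL : ConvexOn ℝ C L)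
    (hx₁ : x₁ ∈ C) (hx₂ : x₂ ∈ C) (hmin₁ : IsMinOn (fun w => ‖a₁ - w‖ ^ 2 + L w) C x₁)
    (hmin₂ : IsMinOn (fun w => ‖a₂ - w‖ ^ 2 + L w) C x₂) :
    ‖x₁ - x₂‖ ^ 2 ≤ ⟪a₁ - a₂, x₁ - x₂⟫ := by
  have h₁ := two_mul_inner_le_of_isMinOn hL hx₁ hx₂ hmin₁
  have h₂ := two_mul_inner_le_of_isMinOn hL hx₂ hx₁ hmin₂
  have hsplit : ⟪a₁ - a₂, x₁ - x₂⟫ - ‖x₁ - x₂‖ ^ 2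
      = -⟪a₁ - x₁, x₂ - x₁⟫ - ⟪a₂ - x₂, x₁ - x₂⟫ := by
    rw [← real_inner_self_eq_norm_sq, ← inner_sub_left, ← inner_neg_right, neg_sub,
      ← inner_sub_left]
    congr 1
    abel
  linarith

end Proximal

theorem altMin_variational_inequality_general
    {H : Type*} [NormedAddCommGroup H] [InnerProductSpace ℝ H]
    (F G : Set H)
    (y : H) (Lf Lg : H → ℝ)
    (hLf : ConvexOn ℝ F Lf) (hLg : ConvexOn ℝ G Lg)
    (fhat ghat : H) (hfhatF : fhat ∈ F) (hghatG : ghat ∈ G)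
    (hmin : ∀ f ∈ F, ∀ g ∈ G,
      ‖y - fhat - ghat‖ ^ 2 + Lf fhat + Lg ghat ≤ ‖y - f - g‖ ^ 2 + Lf f + Lg g)
    (f g : ℕ → H)
    (hfF : ∀ m, 1 ≤ m → f m ∈ F) (hgG : ∀ m, 1 ≤ m → g m ∈ G)
    (hgstep : ∀ m, 1 ≤ m → ∀ g' ∈ G,
      ‖y - f (m - 1) - g m‖ ^ 2 + Lg (g m) ≤ ‖y - f (m - 1) - g'‖ ^ 2 + Lg g')
    (hfstep : ∀ m, 1 ≤ m → ∀ f' ∈ F,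
      ‖y - f m - g m‖ ^ 2 + Lf (f m) ≤ ‖y - f' - g m‖ ^ 2 + Lf f') :
    ∀ m, 1 ≤ m →
      ‖fhat - f m‖ ^ 2 ≤ -⟪fhat - f m, ghat - g m⟫
      ∧ ‖ghat - g (m + 1)‖ ^ 2 ≤ -⟪ghat - g (m + 1), fhat - f m⟫ := by
  intro m hm
  have hfhat : IsMinOn (fun w => ‖y - ghat - w‖ ^ 2 + Lf w) F fhat :=
    isMinOn_iff.2 fun f' hf' => by
      have := hmin f' hf' ghat hghatG
      simp only [sub_right_comm y _ ghat] at this ⊢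
      linarith
  have hghat : IsMinOn (fun w => ‖y - fhat - w‖ ^ 2 + Lg w) G ghat :=
    isMinOn_iff.2 fun g' hg' => by linarith [hmin fhat hfhatF g' hg']
  have hfm : IsMinOn (fun w => ‖y - g m - w‖ ^ 2 + Lf w) F (f m) :=
    isMinOn_iff.2 fun f' hf' => by
      simpa only [sub_right_comm y _ (g m)] using hfstep m hm f' hf'
  have hgm : IsMinOn (fun w => ‖y - f m - w‖ ^ 2 + Lg w) G (g (m + 1)) :=
    isMinOn_iff.2 fun g' hg' => by
      simpa only [Nat.add_sub_cancel] using hgstep (m + 1) (by omega) g' hg'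
  constructor
  · have := norm_sub_sq_le_inner_of_isMinOn hLf hfhatF (hfF m hm) hfhat hfm
    rwa [sub_sub_sub_cancel_left, real_inner_comm, ← neg_sub ghat, inner_neg_right] at this
  · have := norm_sub_sq_le_inner_of_isMinOn hLg hghatG (hgG (m + 1) (by omega)) hghat hgm
    rwa [sub_sub_sub_cancel_left, real_inner_comm, ← neg_sub fhat, inner_neg_right] at this

/-- Key variational inequality in the proof of the paper's Theorem 1:
`‖f̂ - f_m‖² ≤ -⟪f̂ - f_m, ĝ - g_m⟫` and symmetrically for `g_{m+1}`. -/
theorem altMin_variational_inequality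
    {H : Type*} [NormedAddCommGroup H] [InnerProductSpace ℝ H]
    (F G : Set H) (hF : Convex ℝ F) (hG : Convex ℝ G)
    (y : H) (Lf Lg : H → ℝ)
    (hLf : ConvexOn ℝ F Lf) (hLg : ConvexOn ℝ G Lg)
    (fhat ghat : H) (hfhatF : fhat ∈ F) (hghatG : ghat ∈ G)
    (hmin : ∀ f ∈ F, ∀ g ∈ G,
      ‖y - fhat - ghat‖ ^ 2 + Lf fhat + Lg ghat ≤ ‖y - f - g‖ ^ 2 + Lf f + Lg g)
    (f g : ℕ → H) (hf0 : f 0 ∈ F)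
    (hfF : ∀ m, 1 ≤ m → f m ∈ F) (hgG : ∀ m, 1 ≤ m → g m ∈ G)
    (hgstep : ∀ m, 1 ≤ m → ∀ g' ∈ G,
      ‖y - f (m - 1) - g m‖ ^ 2 + Lg (g m) ≤ ‖y - f (m - 1) - g'‖ ^ 2 + Lg g')
    (hfstep : ∀ m, 1 ≤ m → ∀ f' ∈ F,
      ‖y - f m - g m‖ ^ 2 + Lf (f m) ≤ ‖y - f' - g m‖ ^ 2 + Lf f') :
    ∀ m, 1 ≤ m →
      ‖fhat - f m‖ ^ 2 ≤ -⟪fhat - f m, ghat - g m⟫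
      ∧ ‖ghat - g (m + 1)‖ ^ 2 ≤ -⟪ghat - g (m + 1), fhat - f m⟫ :=
  altMin_variational_inequality_general F G y Lf Lg hLf hLg fhat ghat hfhatF hghatG hmin f g hfF hgG
    hgstep hfstep
end

section
/- Assume the alternating-minimization framework, and assume in addition that L_f is γ-strongly convex for some γ > 0. Let (f̂, ĝ) be a joint minimizer and let (f_m, g_m), m ≥ 1, be alternating-minimization iterates. Then for every m ≥ 1, (1 + γ/2)‖f̂ − f_m‖² ≤ −⟨f̂ − f_m, ĝ − g_m⟩; consequently ‖f̂ − f_m‖ ≤ (2/(2 + γ))‖ĝ − g_m‖. (Key inequality in the proof of the paper's Theorem 3.) -/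
/-!
With `g` frozen at `g₀`, the objective `Q g₀ v = ‖y - g₀ - v‖² + Lf v` is `(2 + γ)`-strongly
convex on `F`, so it grows at least like `(1 + γ/2)‖v - v₀‖²` away from its minimiser `v₀`.
Apply this to `Q ĝ` (minimised at `f̂`, by joint optimality) at `f_m`, and to `Q g_m`
(minimised at `f_m`, by the `f`-step) at `f̂`. Adding the two inequalities, the `Lf` terms
cancel and the four squared norms collapse to `-2⟪f̂ - f_m, ĝ - g_m⟫`. Cauchy–Schwarz then gives
the norm bound.
-/

open RealInnerProductSpace Filter Set Topology

section NormedSpace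

variable {E : Type*} [NormedAddCommGroup E] [NormedSpace ℝ E] {s : Set E} {m n : ℝ}
  {f g : E → ℝ}

lemma strongConvexOn_of_forall_Icc (hs : Convex ℝ s)
    (h : ∀ x ∈ s, ∀ z ∈ s, ∀ t ∈ Icc (0 : ℝ) 1,
      f (t • x + (1 - t) • z) ≤ t * f x + (1 - t) * f z - m / 2 * (t * (1 - t)) * ‖x - z‖ ^ 2) :
    StrongConvexOn s m f := by
  refine ⟨hs, fun x hx z hz a b ha hb hab => ?_⟩
  obtain rfl : b = 1 - a := by linarith
  have := h x hx z hz a ⟨ha, by linarith⟩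
  simp only [smul_eq_mul]
  linarith

lemma StrongConvexOn.add (hf : StrongConvexOn s m f) (hg : StrongConvexOn s n g) :
    StrongConvexOn s (m + n) (f + g) := by
  have hmod : (fun r : ℝ => (m + n) / 2 * r ^ 2)
      = (fun r => m / 2 * r ^ 2) + fun r => n / 2 * r ^ 2 := by
    ext r
    simp only [Pi.add_apply]
    ring
  rw [StrongConvexOn, hmod]
  exact UniformConvexOn.add hf hg

lemma IsMinOn.add_sq_norm_sub_le_of_strongConvexOn (hf : StrongConvexOn s m f) {x₀ x : E}
    (hx₀ : x₀ ∈ s) (hmin : IsMinOn f s x₀) (hx : x ∈ s) :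
    f x₀ + m / 2 * ‖x - x₀‖ ^ 2 ≤ f x := by
  suffices m / 2 * ‖x - x₀‖ ^ 2 ≤ f x - f x₀ by linarith
  have hlim : Tendsto (fun t : ℝ => (1 - t) * (m / 2 * ‖x - x₀‖ ^ 2)) (𝓝[>] 0)
      (𝓝 (m / 2 * ‖x - x₀‖ ^ 2)) := by
    have := ((continuous_const.sub continuous_id).mul continuous_const).tendsto (0 : ℝ)
      (f := fun t : ℝ => (1 - t) * (m / 2 * ‖x - x₀‖ ^ 2))
    simpa using this.mono_left nhdsWithin_le_nhds
  refine le_of_tendsto hlim ?_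
  filter_upwards [Ioc_mem_nhdsGT zero_lt_one] with t ⟨ht0, ht1⟩
  -- compare `f x₀` with `f` on the segment towards `x`, then divide by `t`
  have hmem : t • x + (1 - t) • x₀ ∈ s := hf.1 hx hx₀ ht0.le (by linarith) (by ring)
  have hseg := (isMinOn_iff.mp hmin _ hmem).trans (hf.2 hx hx₀ ht0.le (by linarith) (by ring))
  simp only [smul_eq_mul] at hseg
  have : t * ((1 - t) * (m / 2 * ‖x - x₀‖ ^ 2)) ≤ t * (f x - f x₀) := by linarith
  exact le_of_mul_le_mul_left this ht0

end NormedSpace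

section InnerProductSpace

variable {E : Type*} [NormedAddCommGroup E] [InnerProductSpace ℝ E]

lemma strongConvexOn_norm_sub_sq {s : Set E} (hs : Convex ℝ s) (u : E) :
    StrongConvexOn s 2 fun x => ‖u - x‖ ^ 2 := by
  rw [strongConvexOn_iff_convex]
  have hexp : (fun x => ‖u - x‖ ^ 2 - 2 / 2 * ‖x‖ ^ 2)
      = fun x => ‖u‖ ^ 2 - 2 * innerₛₗ ℝ u x := by
    ext x
    rw [norm_sub_sq_real, innerₛₗ_apply_apply]
    ring
  rw [hexp]
  exact (convexOn_const _ hs).sub (((innerₛₗ ℝ u).concaveOn hs).smul zero_le_two)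

lemma norm_sub_sub_sq_add_norm_sub_sub_sq (y a b c d : E) :
    ‖y - a - c‖ ^ 2 + ‖y - b - d‖ ^ 2
      = ‖y - b - c‖ ^ 2 + ‖y - a - d‖ ^ 2 - 2 * ⟪b - a, c - d⟫ := by
  simp only [← real_inner_self_eq_norm_sq, inner_sub_left, inner_sub_right]
  rw [real_inner_comm a y, real_inner_comm b y, real_inner_comm c y, real_inner_comm d y,
    real_inner_comm c a, real_inner_comm c b, real_inner_comm d a, real_inner_comm d b]
  ring

end InnerProductSpace

lemma mul_le_of_mul_sq_le_mul {a b c : ℝ} (ha : 0 ≤ a) (hb : 0 ≤ b) (h : c * a ^ 2 ≤ a * b) :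
    c * a ≤ b := by
  rcases ha.eq_or_lt with rfl | ha
  · simpa using hb
  · exact le_of_mul_le_mul_left (by linarith) ha

theorem altMin_strongConvex_inequality_general
    {H : Type*} [NormedAddCommGroup H] [InnerProductSpace ℝ H]
    (F G : Set H) (hF : Convex ℝ F)
    (y : H) (Lf Lg : H → ℝ)
    (γ : ℝ) (hγ : 0 < γ)
    (hsc : (∀ x ∈ F, ∀ z ∈ F, ∀ t ∈ Set.Icc (0:ℝ) 1,
      Lf (t • x + (1 - t) • z) ≤ t * Lf x + (1 - t) * Lf z - γ / 2 * (t * (1 - t)) * ‖x - z‖ ^ 2))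
    (fhat ghat : H) (hfhatF : fhat ∈ F) (hghatG : ghat ∈ G)
    (hmin : ∀ f ∈ F, ∀ g ∈ G,
      ‖y - fhat - ghat‖ ^ 2 + Lf fhat + Lg ghat ≤ ‖y - f - g‖ ^ 2 + Lf f + Lg g)
    (f g : ℕ → H)
    (hfF : ∀ m, 1 ≤ m → f m ∈ F)
    (hfstep : ∀ m, 1 ≤ m → ∀ f' ∈ F,
      ‖y - f m - g m‖ ^ 2 + Lf (f m) ≤ ‖y - f' - g m‖ ^ 2 + Lf f') :
    ∀ m, 1 ≤ m →
      (1 + γ / 2) * ‖fhat - f m‖ ^ 2 ≤ -⟪fhat - f m, ghat - g m⟫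
      ∧ ‖fhat - f m‖ ≤ 2 / (2 + γ) * ‖ghat - g m‖ := by
  intro m hm
  set Q : H → H → ℝ := fun g₀ v => ‖y - g₀ - v‖ ^ 2 + Lf v
  have hQ : ∀ g₀, StrongConvexOn F (2 + γ) (Q g₀) := fun g₀ =>
    (strongConvexOn_norm_sub_sq hF (y - g₀)).add (strongConvexOn_of_forall_Icc hF hsc)
  have hmin_hat : IsMinOn (Q ghat) F fhat := isMinOn_iff.mpr fun x hx => by
    simp only [Q, sub_right_comm y ghat]
    linarith [hmin x hx ghat hghatG]
  have hmin_m : IsMinOn (Q (g m)) F (f m) := isMinOn_iff.mpr fun x hx => by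
    simpa only [Q, sub_right_comm y (g m)] using hfstep m hm x hx
  have h_hat := hmin_hat.add_sq_norm_sub_le_of_strongConvexOn (hQ ghat) hfhatF (hfF m hm)
  have h_m := hmin_m.add_sq_norm_sub_le_of_strongConvexOn (hQ (g m)) (hfF m hm) hfhatF
  have hcross := norm_sub_sub_sq_add_norm_sub_sub_sq y (f m) fhat ghat (g m)
  rw [norm_sub_rev] at h_hat
  simp only [Q, sub_right_comm y ghat, sub_right_comm y (g m)] at h_hat h_m
  have key : (1 + γ / 2) * ‖fhat - f m‖ ^ 2 ≤ -⟪fhat - f m, ghat - g m⟫ := by linarith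
  refine ⟨key, ?_⟩
  have hcs := (neg_le_abs _).trans (abs_real_inner_le_norm (fhat - f m) (ghat - g m))
  have hbound := mul_le_of_mul_sq_le_mul (norm_nonneg _) (norm_nonneg _) (key.trans hcs)
  rw [div_mul_eq_mul_div, le_div_iff₀ (by linarith)]
  linarith

/-- Key inequality in the proof of the paper's Theorem 3, under `γ`-strong convexity
of `Lf`. -/
theorem altMin_strongConvex_inequality
    {H : Type*} [NormedAddCommGroup H] [InnerProductSpace ℝ H]
    (F G : Set H) (hF : Convex ℝ F) (hG : Convex ℝ G)
    (y : H) (Lf Lg : H → ℝ)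
    (hLf : ConvexOn ℝ F Lf) (hLg : ConvexOn ℝ G Lg)
    (γ : ℝ) (hγ : 0 < γ)
    (hsc : (∀ x ∈ F, ∀ z ∈ F, ∀ t ∈ Set.Icc (0:ℝ) 1,
      Lf (t • x + (1 - t) • z) ≤ t * Lf x + (1 - t) * Lf z - γ / 2 * (t * (1 - t)) * ‖x - z‖ ^ 2))
    (fhat ghat : H) (hfhatF : fhat ∈ F) (hghatG : ghat ∈ G)
    (hmin : ∀ f ∈ F, ∀ g ∈ G,
      ‖y - fhat - ghat‖ ^ 2 + Lf fhat + Lg ghat ≤ ‖y - f - g‖ ^ 2 + Lf f + Lg g)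
    (f g : ℕ → H) (hf0 : f 0 ∈ F)
    (hfF : ∀ m, 1 ≤ m → f m ∈ F) (hgG : ∀ m, 1 ≤ m → g m ∈ G)
    (hgstep : ∀ m, 1 ≤ m → ∀ g' ∈ G,
      ‖y - f (m - 1) - g m‖ ^ 2 + Lg (g m) ≤ ‖y - f (m - 1) - g'‖ ^ 2 + Lg g')
    (hfstep : ∀ m, 1 ≤ m → ∀ f' ∈ F,
      ‖y - f m - g m‖ ^ 2 + Lf (f m) ≤ ‖y - f' - g m‖ ^ 2 + Lf f') :
    ∀ m, 1 ≤ m →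
      (1 + γ / 2) * ‖fhat - f m‖ ^ 2 ≤ -⟪fhat - f m, ghat - g m⟫
      ∧ ‖fhat - f m‖ ≤ 2 / (2 + γ) * ‖ghat - g m‖ :=
  altMin_strongConvex_inequality_general F G hF y Lf Lg γ hγ hsc fhat ghat hfhatF hghatG hmin f g
    hfF hfstep
end

section
/- Assume the alternating-minimization framework, and assume F and G are θ-separable for some θ ∈ [0,1). Let (f̂, ĝ) be a joint minimizer and let (f_m, g_m), m ≥ 1, be alternating-minimization iterates. Then for every m ≥ 1: ‖f̂ − f_m‖ ≤ θ‖ĝ − g_m‖ and ‖ĝ − g_{m+1}‖ ≤ θ‖f̂ − f_m‖; in particular ‖ĝ − g_{m+1}‖ ≤ θ²‖ĝ − g_m‖, so ‖ĝ − g_m‖ ≤ θ^{2(m−1)}‖ĝ − g₁‖ for all m ≥ 1. (One-step contraction established in the proof of the paper's Theorem 1.) -/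
/-!
Each block update is a proximal step: it minimizes `‖c - x‖ ^ 2 + L x` over a convex set, a
2-strongly convex objective, whose value therefore grows at least quadratically away from the
minimizer. Adding this growth bound for the minimizers `x`, `x'` at two targets `c`, `c'` gives
`‖x - x'‖ ^ 2 ≤ ⟪x - x', c - c'⟫`. The joint minimizer is a fixed point of both block updates, so
comparing it with an iterate makes `c - c'` a difference in the other block, and θ-separability
bounds the inner product by `θ * ‖x - x'‖ * ‖c - c'‖`.
-/

open RealInnerProductSpace Filter Set Topology

theorem StrongConvexOn.add_sq_norm_sub_le_of_isMinOn {E : Type*} [NormedAddCommGroup E]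
    [NormedSpace ℝ E] {s : Set E} {m : ℝ} {f : E → ℝ} (hf : StrongConvexOn s m f)
    {x₀ x : E} (hmin : IsMinOn f s x₀) (hx₀ : x₀ ∈ s) (hx : x ∈ s) :
    f x₀ + m / 2 * ‖x - x₀‖ ^ 2 ≤ f x := by
  have along_segment :
      ∀ t ∈ Ioc (0 : ℝ) 1, f x₀ + (1 - t) * (m / 2 * ‖x - x₀‖ ^ 2) ≤ f x := by
    rintro t ⟨ht0, ht1⟩
    have hconv := hf.2 hx hx₀ ht0.le (sub_nonneg.2 ht1) (add_sub_cancel t 1)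
    have hle := isMinOn_iff.1 hmin _ (hf.1 hx hx₀ ht0.le (sub_nonneg.2 ht1) (add_sub_cancel t 1))
    simp only [smul_eq_mul] at hconv
    refine le_of_mul_le_mul_left ?_ ht0
    linear_combination hle.trans hconv
  have hlim : Tendsto (fun t : ℝ ↦ f x₀ + (1 - t) * (m / 2 * ‖x - x₀‖ ^ 2)) (𝓝[>] 0)
      (𝓝 (f x₀ + m / 2 * ‖x - x₀‖ ^ 2)) :=
    ((by fun_prop : Continuous fun t : ℝ ↦ f x₀ + (1 - t) * (m / 2 * ‖x - x₀‖ ^ 2)).tendsto'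
      0 _ (by simp)).mono_left nhdsWithin_le_nhds
  exact le_of_tendsto hlim (eventually_of_mem (Ioc_mem_nhdsGT zero_lt_one) along_segment)

section

variable {H : Type*} [NormedAddCommGroup H]

def penalizedSqDist (L : H → ℝ) (c x : H) : ℝ := ‖c - x‖ ^ 2 + L x

theorem isMinOn_penalizedSqDist_sub_of_forall {C : Set H} {L : H → ℝ} {y b x : H}
    (h : ∀ z ∈ C, ‖y - x - b‖ ^ 2 + L x ≤ ‖y - z - b‖ ^ 2 + L z) :
    IsMinOn (penalizedSqDist L (y - b)) C x :=
  isMinOn_iff.2 fun z hz ↦ by simpa only [penalizedSqDist, sub_right_comm y b] using h z hz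

variable [InnerProductSpace ℝ H]

theorem ConvexOn.strongConvexOn_penalizedSqDist {C : Set H} {L : H → ℝ} (hL : ConvexOn ℝ C L)
    (c : H) : StrongConvexOn C 2 (penalizedSqDist L c) := by
  rw [strongConvexOn_iff_convex]
  have haff : ConvexOn ℝ C fun x ↦ ‖c‖ ^ 2 - (2 • innerₛₗ ℝ c) x :=
    (convexOn_const _ hL.1).sub ((2 • innerₛₗ ℝ c).concaveOn hL.1)
  refine (hL.add haff).congr fun x _ ↦ ?_
  simp only [penalizedSqDist, norm_sub_sq_real, Pi.add_apply, LinearMap.smul_apply,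
    innerₛₗ_apply_apply]
  ring

theorem sq_norm_sub_le_inner_of_isMinOn_penalizedSqDist {C : Set H} {L : H → ℝ}
    (hL : ConvexOn ℝ C L) {c c' x x' : H} (hx : x ∈ C) (hx' : x' ∈ C)
    (hmin : IsMinOn (penalizedSqDist L c) C x) (hmin' : IsMinOn (penalizedSqDist L c') C x') :
    ‖x - x'‖ ^ 2 ≤ ⟪x - x', c - c'⟫ := by
  have h := (hL.strongConvexOn_penalizedSqDist c).add_sq_norm_sub_le_of_isMinOn hmin hx hx'
  have h' := (hL.strongConvexOn_penalizedSqDist c').add_sq_norm_sub_le_of_isMinOn hmin' hx' hx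
  have cross : penalizedSqDist L c x' + penalizedSqDist L c' x
      - penalizedSqDist L c x - penalizedSqDist L c' x' = 2 * ⟪x - x', c - c'⟫ := by
    simp only [penalizedSqDist, norm_sub_sq_real, inner_sub_left, inner_sub_right,
      real_inner_comm x c, real_inner_comm x' c, real_inner_comm x c', real_inner_comm x' c']
    ring
  rw [norm_sub_rev x' x] at h
  linarith

theorem norm_sub_le_mul_of_isMinOn_penalizedSqDist {C : Set H} {L : H → ℝ}
    (hL : ConvexOn ℝ C L) {θ : ℝ} (hθ : 0 ≤ θ) (y : H) {b b' x x' : H} (hx : x ∈ C) (hx' : x' ∈ C)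
    (hsep : |⟪x - x', b - b'⟫| ≤ θ * (‖x - x'‖ * ‖b - b'‖))
    (hmin : IsMinOn (penalizedSqDist L (y - b)) C x)
    (hmin' : IsMinOn (penalizedSqDist L (y - b')) C x') :
    ‖x - x'‖ ≤ θ * ‖b - b'‖ := by
  have h := sq_norm_sub_le_inner_of_isMinOn_penalizedSqDist hL hx hx' hmin hmin'
  rw [sub_sub_sub_cancel_left, ← neg_sub b b', inner_neg_right] at h
  have hsq : ‖x - x'‖ ^ 2 ≤ θ * (‖x - x'‖ * ‖b - b'‖) := h.trans ((neg_le_abs _).trans hsep)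
  nlinarith [mul_nonneg hθ (norm_nonneg (b - b'))]

end

theorem altMin_one_step_contraction_general
    {H : Type*} [NormedAddCommGroup H] [InnerProductSpace ℝ H]
    (F G : Set H)
    (y : H) (Lf Lg : H → ℝ)
    (hLf : ConvexOn ℝ F Lf) (hLg : ConvexOn ℝ G Lg)
    (θ : ℝ) (hθ0 : 0 ≤ θ)
    (hsep : ∀ f₁ ∈ F, ∀ f₂ ∈ F, ∀ g₁ ∈ G, ∀ g₂ ∈ G,
      |(⟪f₁ - f₂, g₁ - g₂⟫)| ≤ θ * (‖f₁ - f₂‖ * ‖g₁ - g₂‖))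
    (fhat ghat : H) (hfhatF : fhat ∈ F) (hghatG : ghat ∈ G)
    (hmin : ∀ f ∈ F, ∀ g ∈ G,
      ‖y - fhat - ghat‖ ^ 2 + Lf fhat + Lg ghat ≤ ‖y - f - g‖ ^ 2 + Lf f + Lg g)
    (f g : ℕ → H)
    (hfF : ∀ m, 1 ≤ m → f m ∈ F) (hgG : ∀ m, 1 ≤ m → g m ∈ G)
    (hgstep : ∀ m, 1 ≤ m → ∀ g' ∈ G,
      ‖y - f (m - 1) - g m‖ ^ 2 + Lg (g m) ≤ ‖y - f (m - 1) - g'‖ ^ 2 + Lg g')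
    (hfstep : ∀ m, 1 ≤ m → ∀ f' ∈ F,
      ‖y - f m - g m‖ ^ 2 + Lf (f m) ≤ ‖y - f' - g m‖ ^ 2 + Lf f') :
    (∀ m, 1 ≤ m →
      ‖fhat - f m‖ ≤ θ * ‖ghat - g m‖
      ∧ ‖ghat - g (m + 1)‖ ≤ θ * ‖fhat - f m‖
      ∧ ‖ghat - g (m + 1)‖ ≤ θ ^ 2 * ‖ghat - g m‖)
    ∧ (∀ m, 1 ≤ m → ‖ghat - g m‖ ≤ θ ^ (2 * (m - 1)) * ‖ghat - g 1‖) := by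
  have hfhat : IsMinOn (penalizedSqDist Lf (y - ghat)) F fhat :=
    isMinOn_penalizedSqDist_sub_of_forall fun f' hf' ↦ by linarith [hmin f' hf' ghat hghatG]
  have hghat : IsMinOn (penalizedSqDist Lg (y - fhat)) G ghat :=
    isMinOn_iff.2 fun g' hg' ↦ by
      simp only [penalizedSqDist]; linarith [hmin fhat hfhatF g' hg']
  have contraction (m : ℕ) (hm : 1 ≤ m) :
      ‖fhat - f m‖ ≤ θ * ‖ghat - g m‖ ∧ ‖ghat - g (m + 1)‖ ≤ θ * ‖fhat - f m‖ := by
    have hgnext : IsMinOn (penalizedSqDist Lg (y - f m)) G (g (m + 1)) :=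
      isMinOn_iff.2 <| by
        simpa only [penalizedSqDist, Nat.add_sub_cancel] using hgstep (m + 1) (by omega)
    have hsep' := hsep fhat hfhatF (f m) (hfF m hm) ghat hghatG (g (m + 1)) (hgG _ (by omega))
    rw [real_inner_comm, mul_comm ‖fhat - f m‖] at hsep'
    exact ⟨norm_sub_le_mul_of_isMinOn_penalizedSqDist hLf hθ0 y hfhatF (hfF m hm)
        (hsep fhat hfhatF (f m) (hfF m hm) ghat hghatG (g m) (hgG m hm)) hfhat
        (isMinOn_penalizedSqDist_sub_of_forall (hfstep m hm)),
      norm_sub_le_mul_of_isMinOn_penalizedSqDist hLg hθ0 y hghatG (hgG _ (by omega)) hsep'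
        hghat hgnext⟩
  have two_steps (m : ℕ) (hm : 1 ≤ m) : ‖ghat - g (m + 1)‖ ≤ θ ^ 2 * ‖ghat - g m‖ :=
    calc ‖ghat - g (m + 1)‖ ≤ θ * ‖fhat - f m‖ := (contraction m hm).2
      _ ≤ θ * (θ * ‖ghat - g m‖) := by gcongr; exact (contraction m hm).1
      _ = θ ^ 2 * ‖ghat - g m‖ := by ring
  refine ⟨fun m hm ↦ ⟨(contraction m hm).1, (contraction m hm).2, two_steps m hm⟩, fun m hm ↦ ?_⟩
  obtain ⟨n, rfl⟩ := Nat.exists_eq_add_of_le' hm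
  simpa [pow_mul] using le_geom (u := fun k ↦ ‖ghat - g (k + 1)‖) (sq_nonneg θ) n
    fun k _ ↦ two_steps (k + 1) (by omega)

/-- One-step contraction established in the proof of the paper's Theorem 1. -/
theorem altMin_one_step_contraction
    {H : Type*} [NormedAddCommGroup H] [InnerProductSpace ℝ H]
    (F G : Set H) (hF : Convex ℝ F) (hG : Convex ℝ G)
    (y : H) (Lf Lg : H → ℝ)
    (hLf : ConvexOn ℝ F Lf) (hLg : ConvexOn ℝ G Lg)
    (θ : ℝ) (hθ0 : 0 ≤ θ) (hθ1 : θ < 1)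
    (hsep : ∀ f₁ ∈ F, ∀ f₂ ∈ F, ∀ g₁ ∈ G, ∀ g₂ ∈ G,
      |(⟪f₁ - f₂, g₁ - g₂⟫)| ≤ θ * (‖f₁ - f₂‖ * ‖g₁ - g₂‖))
    (fhat ghat : H) (hfhatF : fhat ∈ F) (hghatG : ghat ∈ G)
    (hmin : ∀ f ∈ F, ∀ g ∈ G,
      ‖y - fhat - ghat‖ ^ 2 + Lf fhat + Lg ghat ≤ ‖y - f - g‖ ^ 2 + Lf f + Lg g)
    (f g : ℕ → H) (hf0 : f 0 ∈ F)
    (hfF : ∀ m, 1 ≤ m → f m ∈ F) (hgG : ∀ m, 1 ≤ m → g m ∈ G)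
    (hgstep : ∀ m, 1 ≤ m → ∀ g' ∈ G,
      ‖y - f (m - 1) - g m‖ ^ 2 + Lg (g m) ≤ ‖y - f (m - 1) - g'‖ ^ 2 + Lg g')
    (hfstep : ∀ m, 1 ≤ m → ∀ f' ∈ F,
      ‖y - f m - g m‖ ^ 2 + Lf (f m) ≤ ‖y - f' - g m‖ ^ 2 + Lf f') :
    (∀ m, 1 ≤ m →
      ‖fhat - f m‖ ≤ θ * ‖ghat - g m‖
      ∧ ‖ghat - g (m + 1)‖ ≤ θ * ‖fhat - f m‖
      ∧ ‖ghat - g (m + 1)‖ ≤ θ ^ 2 * ‖ghat - g m‖)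
    ∧ (∀ m, 1 ≤ m → ‖ghat - g m‖ ≤ θ ^ (2 * (m - 1)) * ‖ghat - g 1‖) :=
  altMin_one_step_contraction_general F G y Lf Lg hLf hLg θ hθ0 hsep fhat ghat hfhatF hghatG hmin f
    g hfF hgG hgstep hfstep
end

section
/- Assume the alternating-minimization framework, and assume F and G are 0-separable, i.e. ⟨f₁ − f₂, g₁ − g₂⟩ = 0 for all f₁, f₂ ∈ F and g₁, g₂ ∈ G. Let (f̂, ĝ) be a joint minimizer and let (f_m, g_m), m ≥ 1, be alternating-minimization iterates. Then f_m = f̂ for every m ≥ 1 and g_m = ĝ for every m ≥ 2; that is, the algorithm converges exactly after at most two iterations. (The paper's claim that for orthogonal classes a few iterations of the algorithm suffice.) -/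
open RealInnerProductSpace

/-
With `F ⟂ G`, the `f`-objective `x ↦ ‖y - x - g‖² + L_f x` on `F` changes only by a constant
when `g ∈ G` is replaced by another element of `G`; so every `f`-step minimizes the same
function as `f̂` does, namely `x ↦ ‖y - ĝ - x‖² + L_f x`. This function is strongly convex,
hence has a unique minimizer on `F`, and `f_m = f̂` for all `m ≥ 1`. The `g`-step at `m ≥ 2`
then minimizes `x ↦ ‖y - f̂ - x‖² + L_g x` over `G`, whose unique minimizer is `ĝ`.
-/

section

variable {E : Type*} [NormedAddCommGroup E] [InnerProductSpace ℝ E]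

lemma strongConvexOn_norm_sub_sq_add {s : Set E} {L : E → ℝ} (hL : ConvexOn ℝ s L) (c : E) :
    StrongConvexOn s 2 fun x ↦ ‖c - x‖ ^ 2 + L x := by
  rw [strongConvexOn_iff_convex]
  have haffine : ConvexOn ℝ s fun x ↦ ⟪(-2 : ℝ) • c, x⟫ + ‖c‖ ^ 2 :=
    ((innerₛₗ ℝ ((-2 : ℝ) • c)).convexOn hL.1).add_const _
  refine (hL.add haffine).congr fun x _ ↦ ?_
  simp only [Pi.add_apply, real_inner_smul_left, norm_sub_sq_real]
  ring

lemma eq_of_isMinOn_norm_sub_sq_add {s : Set E} {L : E → ℝ} (hL : ConvexOn ℝ s L) {c a b : E}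
    (ha : IsMinOn (fun x ↦ ‖c - x‖ ^ 2 + L x) s a)
    (hb : IsMinOn (fun x ↦ ‖c - x‖ ^ 2 + L x) s b) (has : a ∈ s) (hbs : b ∈ s) : a = b :=
  ((strongConvexOn_norm_sub_sq_add hL c).strictConvexOn two_pos).eq_of_isMinOn ha hb has hbs

lemma norm_sub_sq_sub_norm_sub_sq_of_inner_eq_zero {u v w : E} (h : ⟪u - v, w⟫ = 0) :
    ‖u - w‖ ^ 2 - ‖v - w‖ ^ 2 = ‖u‖ ^ 2 - ‖v‖ ^ 2 := by
  rw [inner_sub_left] at h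
  rw [norm_sub_sq_real, norm_sub_sq_real]
  linarith

lemma isMinOn_norm_sub_sq_add_of_inner_eq_zero {s : Set E} {L : E → ℝ} {y g₁ g₂ a : E}
    (horth : ∀ x ∈ s, ⟪a - x, g₁ - g₂⟫ = 0)
    (ha : IsMinOn (fun x ↦ ‖y - x - g₁‖ ^ 2 + L x) s a) :
    IsMinOn (fun x ↦ ‖y - g₂ - x‖ ^ 2 + L x) s a := by
  refine isMinOn_iff.2 fun x hx ↦ ?_
  have hshift (z : E) : y - z - g₁ = (y - g₂ - z) - (g₁ - g₂) := by abel
  have hdiff := norm_sub_sq_sub_norm_sub_sq_of_inner_eq_zero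
    (u := y - g₂ - x) (v := y - g₂ - a) (w := g₁ - g₂)
    (by rw [sub_sub_sub_cancel_left]; exact horth x hx)
  have hmin := isMinOn_iff.1 ha x hx
  simp only [hshift] at hmin hdiff
  linarith

end

theorem altMin_orthogonal_exact_convergence_general
    {H : Type*} [NormedAddCommGroup H] [InnerProductSpace ℝ H]
    (F G : Set H)
    (y : H) (Lf Lg : H → ℝ)
    (hLf : ConvexOn ℝ F Lf) (hLg : ConvexOn ℝ G Lg)
    (horth : ∀ f₁ ∈ F, ∀ f₂ ∈ F, ∀ g₁ ∈ G, ∀ g₂ ∈ G,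
      ⟪f₁ - f₂, g₁ - g₂⟫ = 0)
    (fhat ghat : H) (hfhatF : fhat ∈ F) (hghatG : ghat ∈ G)
    (hmin : ∀ f ∈ F, ∀ g ∈ G,
      ‖y - fhat - ghat‖ ^ 2 + Lf fhat + Lg ghat ≤ ‖y - f - g‖ ^ 2 + Lf f + Lg g)
    (f g : ℕ → H)
    (hfF : ∀ m, 1 ≤ m → f m ∈ F) (hgG : ∀ m, 1 ≤ m → g m ∈ G)
    (hgstep : ∀ m, 1 ≤ m → ∀ g' ∈ G,
      ‖y - f (m - 1) - g m‖ ^ 2 + Lg (g m) ≤ ‖y - f (m - 1) - g'‖ ^ 2 + Lg g')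
    (hfstep : ∀ m, 1 ≤ m → ∀ f' ∈ F,
      ‖y - f m - g m‖ ^ 2 + Lf (f m) ≤ ‖y - f' - g m‖ ^ 2 + Lf f') :
    (∀ m, 1 ≤ m → f m = fhat) ∧ (∀ m, 2 ≤ m → g m = ghat) := by
  have hfhat : IsMinOn (fun x ↦ ‖y - ghat - x‖ ^ 2 + Lf x) F fhat :=
    isMinOn_norm_sub_sq_add_of_inner_eq_zero (g₁ := ghat) (fun _ _ ↦ by simp)
      (isMinOn_iff.2 fun x hx ↦ by linarith [hmin x hx ghat hghatG])
  have hghat : IsMinOn (fun x ↦ ‖y - fhat - x‖ ^ 2 + Lg x) G ghat :=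
    isMinOn_iff.2 fun x hx ↦ by linarith [hmin fhat hfhatF x hx]
  have hf (m : ℕ) (hm : 1 ≤ m) : f m = fhat :=
    eq_of_isMinOn_norm_sub_sq_add hLf
      (isMinOn_norm_sub_sq_add_of_inner_eq_zero
        (fun x hx ↦ horth (f m) (hfF m hm) x hx (g m) (hgG m hm) ghat hghatG)
        (isMinOn_iff.2 (hfstep m hm)))
      hfhat (hfF m hm) hfhatF
  refine ⟨hf, fun m hm ↦ ?_⟩
  have hprev : f (m - 1) = fhat := hf (m - 1) (by omega)
  have hgm : IsMinOn (fun x ↦ ‖y - fhat - x‖ ^ 2 + Lg x) G (g m) :=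
    isMinOn_iff.2 fun x hx ↦ hprev ▸ hgstep m (by omega) x hx
  exact eq_of_isMinOn_norm_sub_sq_add hLg hgm hghat (hgG m (by omega)) hghatG

/-- For orthogonal (`0`-separable) classes, the alternating-minimization algorithm
converges exactly after at most two iterations. -/
theorem altMin_orthogonal_exact_convergence
    {H : Type*} [NormedAddCommGroup H] [InnerProductSpace ℝ H]
    (F G : Set H) (hF : Convex ℝ F) (hG : Convex ℝ G)
    (y : H) (Lf Lg : H → ℝ)
    (hLf : ConvexOn ℝ F Lf) (hLg : ConvexOn ℝ G Lg)
    (horth : ∀ f₁ ∈ F, ∀ f₂ ∈ F, ∀ g₁ ∈ G, ∀ g₂ ∈ G,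
      ⟪f₁ - f₂, g₁ - g₂⟫ = 0)
    (fhat ghat : H) (hfhatF : fhat ∈ F) (hghatG : ghat ∈ G)
    (hmin : ∀ f ∈ F, ∀ g ∈ G,
      ‖y - fhat - ghat‖ ^ 2 + Lf fhat + Lg ghat ≤ ‖y - f - g‖ ^ 2 + Lf f + Lg g)
    (f g : ℕ → H) (hf0 : f 0 ∈ F)
    (hfF : ∀ m, 1 ≤ m → f m ∈ F) (hgG : ∀ m, 1 ≤ m → g m ∈ G)
    (hgstep : ∀ m, 1 ≤ m → ∀ g' ∈ G,
      ‖y - f (m - 1) - g m‖ ^ 2 + Lg (g m) ≤ ‖y - f (m - 1) - g'‖ ^ 2 + Lg g')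
    (hfstep : ∀ m, 1 ≤ m → ∀ f' ∈ F,
      ‖y - f m - g m‖ ^ 2 + Lf (f m) ≤ ‖y - f' - g m‖ ^ 2 + Lf f') :
    (∀ m, 1 ≤ m → f m = fhat) ∧ (∀ m, 2 ≤ m → g m = ghat) :=
  altMin_orthogonal_exact_convergence_general F G y Lf Lg hLf hLg horth fhat ghat hfhatF hghatG hmin
    f g hfF hgG hgstep hfstep
end

section
/- Let θ > 0 and define ψ(θ) = 2√(3θ)|sin θ − θ cos θ| / (θ²√(2θ − sin 2θ)) (note 2θ − sin 2θ > 0 for θ > 0). Then for all real α₁, α₂, |∫₀¹ (α₁ x)(α₂ sin(θx)) dx| ≤ ψ(θ) · (∫₀¹ (α₁ x)² dx)^{1/2} · (∫₀¹ (α₂ sin(θx))² dx)^{1/2}. (Separability constant for the classes F = {α₁x} and G = {α₂ sin(θx)} on [0,1], used in the paper's numerical study of the convergence rate.) -/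
/-!
Both classes are one-dimensional, so `|⟨f, g⟩| / (‖f‖ ‖g‖)` does not depend on `α₁, α₂`: the bound
holds with equality, and `ψ(θ)` is the value of this ratio at `f = x`, `g = sin (θ x)`. It is
computed from the closed forms `∫₀¹ x sin (θx) = (sin θ - θ cos θ) / θ²`, `∫₀¹ x² = 1/3` and
`∫₀¹ sin² (θx) = (2θ - sin 2θ) / (4θ)`, the first and last by substituting `u = θx`.
-/

open Real intervalIntegral

theorem integral_mul_sin (a b : ℝ) :
    ∫ x in a..b, x * sin x = sin b - b * cos b - (sin a - a * cos a) := by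
  refine integral_eq_sub_of_hasDerivAt (f := fun x => sin x - x * cos x) (fun x _ => ?_)
    ((by fun_prop : Continuous fun x => x * sin x).intervalIntegrable _ _)
  exact ((hasDerivAt_sin x).sub ((hasDerivAt_id' x).mul (hasDerivAt_cos x))).congr_deriv (by ring)

theorem integral_mul_sin_const_mul {θ : ℝ} (hθ : θ ≠ 0) :
    ∫ x in (0:ℝ)..1, x * sin (θ * x) = (sin θ - θ * cos θ) / θ ^ 2 := by
  have h := integral_comp_mul_left (fun u => u * sin u) hθ (a := 0) (b := 1)
  simp only [mul_zero, mul_one, integral_mul_sin, sin_zero, cos_zero, smul_eq_mul] at h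
  have : (fun x => x * sin (θ * x)) = fun x => θ⁻¹ * ((θ * x) * sin (θ * x)) := by
    ext x; field_simp
  rw [this, intervalIntegral.integral_const_mul, h]
  field_simp
  ring

theorem integral_sin_const_mul_sq {θ : ℝ} (hθ : θ ≠ 0) :
    ∫ x in (0:ℝ)..1, sin (θ * x) ^ 2 = (2 * θ - sin (2 * θ)) / (4 * θ) := by
  rw [integral_comp_mul_left (fun u => sin u ^ 2) hθ, mul_zero, mul_one, integral_sin_sq,
    sin_two_mul]
  simp only [sin_zero, cos_zero, mul_one, zero_sub, sub_zero, smul_eq_mul]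
  field_simp
  ring

section OneDimensional

variable {a b : ℝ} {u v : ℝ → ℝ}

theorem sqrt_integral_const_mul_sq (α : ℝ) :
    √(∫ x in a..b, (α * u x) ^ 2) = |α| * √(∫ x in a..b, u x ^ 2) := by
  simp_rw [mul_pow, intervalIntegral.integral_const_mul]
  rw [sqrt_mul (sq_nonneg α), sqrt_sq_eq_abs]

theorem abs_integral_const_mul_mul_const_mul (hu : 0 < ∫ x in a..b, u x ^ 2)
    (hv : 0 < ∫ x in a..b, v x ^ 2) (α₁ α₂ : ℝ) :
    |∫ x in a..b, (α₁ * u x) * (α₂ * v x)|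
      = |∫ x in a..b, u x * v x| / (√(∫ x in a..b, u x ^ 2) * √(∫ x in a..b, v x ^ 2))
        * √(∫ x in a..b, (α₁ * u x) ^ 2) * √(∫ x in a..b, (α₂ * v x) ^ 2) := by
  have hu' := sqrt_pos.2 hu
  have hv' := sqrt_pos.2 hv
  simp_rw [sqrt_integral_const_mul_sq, mul_mul_mul_comm, intervalIntegral.integral_const_mul,
    abs_mul]
  field_simp

end OneDimensional

/-- Separability constant `ψ(θ)` for the classes `F = {α₁ x}` and `G = {α₂ sin(θ x)}`
on `[0,1]`, used in the paper's numerical study of the convergence rate (Section 5.1). -/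
theorem separability_constant_linear_sine (θ : ℝ) (hθ : 0 < θ) :
    0 < 2 * θ - Real.sin (2 * θ)
    ∧ ∀ α₁ α₂ : ℝ,
      |∫ x in (0:ℝ)..1, (α₁ * x) * (α₂ * Real.sin (θ * x))|
        ≤ (2 * Real.sqrt (3 * θ) * |Real.sin θ - θ * Real.cos θ|
            / (θ ^ 2 * Real.sqrt (2 * θ - Real.sin (2 * θ))))
          * Real.sqrt (∫ x in (0:ℝ)..1, (α₁ * x) ^ 2)
          * Real.sqrt (∫ x in (0:ℝ)..1, (α₂ * Real.sin (θ * x)) ^ 2) := by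
  have hD : 0 < 2 * θ - sin (2 * θ) := sub_pos.2 (sin_lt (by positivity))
  have hU : ∫ x in (0:ℝ)..1, x ^ 2 = 1 / 3 := by norm_num [integral_pow]
  have hV := integral_sin_const_mul_sq hθ.ne'
  refine ⟨hD, fun α₁ α₂ => le_of_eq ?_⟩
  rw [abs_integral_const_mul_mul_const_mul (u := fun x => x) (v := fun x => sin (θ * x))
    (by rw [hU]; norm_num) (by rw [hV]; positivity), integral_mul_sin_const_mul hθ.ne', hU, hV]
  congr 2
  have h3θ : 0 < √(3 * θ) := sqrt_pos.2 (by positivity)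
  have hsD : 0 < √(2 * θ - sin (2 * θ)) := sqrt_pos.2 hD
  have hnorms : 1 / 3 * ((2 * θ - sin (2 * θ)) / (4 * θ))
      = (√(2 * θ - sin (2 * θ)) / (2 * √(3 * θ))) ^ 2 := by
    rw [div_pow, mul_pow, sq_sqrt hD.le, sq_sqrt (by positivity)]
    field_simp
    ring
  rw [← sqrt_mul (by norm_num), hnorms, sqrt_sq (by positivity), abs_div,
    abs_of_pos (by positivity : (0:ℝ) < θ ^ 2)]
  field_simp
end
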